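/- arXiv:2406.10814 — 9 statements merged into one kernel-verified Lean document; each statement's English description precedes it below -/
import Mathlib

section
/- Let S⁺ and S⁻ be disjoint subsets of Z_2^k ∖ {0} with |S⁺ ∪ S⁻| = k+1, such that the sum of all elements of S⁺ ∪ S⁻ equals 0, every proper subset of S⁺ ∪ S⁻ is linearly independent (equivalently, no nonempty proper subset of S⁺ ∪ S⁻ has zero sum), and |S⁻| is odd. Then the signed Cayley graph (Z_2^k, S⁺, S⁻) is switching-isomorphic to the signed projective cube SPC(k). -/
universe u v

/-- A signed graph on vertex set `V`: two symmetric relations giving the positive and the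
negative adjacencies (a pair joined by both a positive and a negative edge is a digon). -/
structure SignedGraph (V : Type u) where
  pos : V → V → Prop
  neg : V → V → Prop
  pos_symm : ∀ ⦃x y : V⦄, pos x y → pos y x
  neg_symm : ∀ ⦃x y : V⦄, neg x y → neg y x

namespace SignedGraph

variable {V : Type u} {W : Type v}

/-- Walks in a signed graph, recording the sign of every step. -/
inductive Walk (G : SignedGraph V) : V → V → Type u
  | nil (v : V) : Walk G v v
  | consPos {u v w : V} (h : G.pos u v) (p : Walk G v w) : Walk G u w
  | consNeg {u v w : V} (h : G.neg u v) (p : Walk G v w) : Walk G u w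

namespace Walk

variable {G : SignedGraph V}

/-- The length of a walk. -/
def length : ∀ {u v : V}, G.Walk u v → ℕ
  | _, _, .nil _ => 0
  | _, _, .consPos _ p => p.length + 1
  | _, _, .consNeg _ p => p.length + 1

/-- The number of negative edges of a walk (counted with multiplicity). -/
def negCount : ∀ {u v : V}, G.Walk u v → ℕ
  | _, _, .nil _ => 0
  | _, _, .consPos _ p => p.negCount
  | _, _, .consNeg _ p => p.negCount + 1

/-- Concatenation of walks. -/
def append : ∀ {u v w : V}, G.Walk u v → G.Walk v w → G.Walk u w
  | _, _, _, .nil _, q => q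
  | _, _, _, .consPos h p, q => .consPos h (p.append q)
  | _, _, _, .consNeg h p, q => .consNeg h (p.append q)

/-- Reversal of a walk. -/
def reverse : ∀ {u v : V}, G.Walk u v → G.Walk v u
  | _, _, .nil v => .nil v
  | _, _, .consPos h p => p.reverse.append (.consPos (G.pos_symm h) (.nil _))
  | _, _, .consNeg h p => p.reverse.append (.consNeg (G.neg_symm h) (.nil _))

end Walk

/-- `g_{ij}(G,σ)`: the length of a shortest (nontrivial) closed walk in which the number of
negative edges has parity `i` and the length has parity `j`; `⊤ = ∞` if no such walk exists. -/
noncomputable def gir (G : SignedGraph V) (i j : ZMod 2) : ℕ∞ :=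
  sInf {n : ℕ∞ | ∃ (v : V) (p : G.Walk v v),
    0 < p.length ∧ (p.negCount : ZMod 2) = i ∧ (p.length : ZMod 2) = j ∧ (p.length : ℕ∞) = n}

/-- The negative (unbalanced) girth: the length of a shortest negative closed walk, which is
the same as the length of a shortest negative cycle (`⊤ = ∞` if there is none). -/
noncomputable def negGirth (G : SignedGraph V) : ℕ∞ :=
  sInf {n : ℕ∞ | ∃ (v : V) (p : G.Walk v v), Odd p.negCount ∧ (p.length : ℕ∞) = n}

/-- The odd girth of the underlying graph: the length of a shortest closed walk of odd length,
which is the same as the length of a shortest odd cycle (`⊤ = ∞` if there is none). -/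
noncomputable def oddGirth (G : SignedGraph V) : ℕ∞ :=
  sInf {n : ℕ∞ | ∃ (v : V) (p : G.Walk v v), Odd p.length ∧ (p.length : ℕ∞) = n}

/-- Switching a signed graph at a set `X` of vertices: the sign of every edge with exactly one
endpoint in `X` is negated. -/
def switch (G : SignedGraph V) (X : Set V) : SignedGraph V where
  pos x y := (G.pos x y ∧ ((x ∈ X) ↔ (y ∈ X))) ∨ (G.neg x y ∧ ¬((x ∈ X) ↔ (y ∈ X)))
  neg x y := (G.neg x y ∧ ((x ∈ X) ↔ (y ∈ X))) ∨ (G.pos x y ∧ ¬((x ∈ X) ↔ (y ∈ X)))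
  pos_symm := by
    rintro x y (⟨h, hxy⟩ | ⟨h, hxy⟩)
    · exact Or.inl ⟨G.pos_symm h, hxy.symm⟩
    · exact Or.inr ⟨G.neg_symm h, fun h' => hxy h'.symm⟩
  neg_symm := by
    rintro x y (⟨h, hxy⟩ | ⟨h, hxy⟩)
    · exact Or.inl ⟨G.neg_symm h, hxy.symm⟩
    · exact Or.inr ⟨G.pos_symm h, fun h' => hxy h'.symm⟩

/-- A homomorphism of signed graphs: a vertex map which, after replacing the signature of the
source by a switching-equivalent one, preserves edges together with their signs. -/
def Hom (G : SignedGraph V) (H : SignedGraph W) : Prop :=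
  ∃ (X : Set V) (f : V → W),
    (∀ ⦃x y : V⦄, (G.switch X).pos x y → H.pos (f x) (f y)) ∧
    (∀ ⦃x y : V⦄, (G.switch X).neg x y → H.neg (f x) (f y))

/-- Isomorphism of signed graphs: a bijection carrying positive edges to positive edges and
negative edges to negative edges. -/
def Iso (G : SignedGraph V) (H : SignedGraph W) : Prop :=
  ∃ f : V ≃ W, (∀ x y, G.pos x y ↔ H.pos (f x) (f y)) ∧ (∀ x y, G.neg x y ↔ H.neg (f x) (f y))

/-- Two signed graphs are switching-isomorphic if one is isomorphic to a switching of the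
other. -/
def SwitchIso (G : SignedGraph V) (H : SignedGraph W) : Prop :=
  ∃ X : Set W, Iso G (H.switch X)

/-- The induced signed subgraph on a set of vertices. -/
def induce (G : SignedGraph V) (X : Set V) : SignedGraph X where
  pos a b := G.pos a b
  neg a b := G.neg a b
  pos_symm := fun _ _ h => G.pos_symm h
  neg_symm := fun _ _ h => G.neg_symm h

/-- The "same connected component" equivalence relation. -/
def reachSetoid (G : SignedGraph V) : Setoid V :=
  ⟨fun u v => Nonempty (G.Walk u v),
   ⟨fun v => ⟨Walk.nil v⟩,
    fun h => h.elim fun p => ⟨p.reverse⟩,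
    fun h h' => h.elim fun p => h'.elim fun q => ⟨p.append q⟩⟩⟩

/-- The underlying graph is bipartite. -/
def Bipartite (G : SignedGraph V) : Prop :=
  ∃ c : V → Bool, ∀ x y, (G.pos x y ∨ G.neg x y) → c x ≠ c y

/-- The extended double cover of a signed graph: vertices `x₀, x₁` for every vertex `x`,
a negative edge `x₀x₁` for every vertex `x`, positive edges `x₀y₀, x₁y₁` for every positive
edge `xy` and positive edges `x₀y₁, x₁y₀` for every negative edge `xy`. -/
def EDC (G : SignedGraph V) : SignedGraph (V × ZMod 2) where
  pos p q := (G.pos p.1 q.1 ∧ p.2 = q.2) ∨ (G.neg p.1 q.1 ∧ p.2 ≠ q.2)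
  neg p q := p.1 = q.1 ∧ p.2 ≠ q.2
  pos_symm := by
    rintro p q (⟨h, e⟩ | ⟨h, e⟩)
    · exact Or.inl ⟨G.pos_symm h, e.symm⟩
    · exact Or.inr ⟨G.neg_symm h, fun h' => e h'.symm⟩
  neg_symm := by
    rintro p q ⟨h, e⟩
    exact ⟨h.symm, fun h' => e h'.symm⟩

/-- The common product of two signed graphs: the positive edges form the Cartesian product of
the positive subgraphs, the negative edges form the categorical product of the negative
subgraphs. -/
def cprod (G : SignedGraph V) (H : SignedGraph W) : SignedGraph (V × W) where
  pos p q := (G.pos p.1 q.1 ∧ p.2 = q.2) ∨ (p.1 = q.1 ∧ H.pos p.2 q.2)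
  neg p q := G.neg p.1 q.1 ∧ H.neg p.2 q.2
  pos_symm := by
    rintro p q (⟨h, e⟩ | ⟨e, h⟩)
    · exact Or.inl ⟨G.pos_symm h, e.symm⟩
    · exact Or.inr ⟨e.symm, H.pos_symm h⟩
  neg_symm := fun _ _ h => ⟨G.neg_symm h.1, H.neg_symm h.2⟩

end SignedGraph

section Cayley

lemma sub_comm_of_two_torsion {Γ : Type u} [AddCommGroup Γ] (h2 : ∀ x : Γ, x + x = 0)
    (x y : Γ) : y - x = x - y := by
  rw [← neg_sub x y]
  exact neg_eq_of_add_eq_zero_left (h2 (x - y))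

/-- The signed Cayley graph `(Γ, S⁺, S⁻)` on an elementary abelian `2`-group `Γ`:
`x` and `y` are joined by a positive edge when `x - y ∈ S⁺` and by a negative
edge when `x - y ∈ S⁻`. -/
def SCayley2 (Γ : Type u) [AddCommGroup Γ] (h2 : ∀ x : Γ, x + x = 0)
    (Sp Sn : Set Γ) : SignedGraph Γ where
  pos x y := x - y ∈ Sp
  neg x y := x - y ∈ Sn
  pos_symm := fun x y h => by
    show y - x ∈ Sp
    rw [sub_comm_of_two_torsion h2 x y]
    exact h
  neg_symm := fun x y h => by
    show y - x ∈ Sn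
    rw [sub_comm_of_two_torsion h2 x y]
    exact h

lemma pi2 (n : ℕ) : ∀ x : Fin n → ZMod 2, x + x = 0 := by
  intro x
  funext i
  have h : ∀ a : ZMod 2, a + a = 0 := by decide
  exact h (x i)

/-- The signed projective cube `SPC(k)`: the signed Cayley graph on `ℤ₂ᵏ` whose positive
difference set is the standard basis `{e₁, …, e_k}` and whose negative difference set is `{J}`,
`J` being the all-ones vector. -/
def SPC (k : ℕ) : SignedGraph (Fin k → ZMod 2) :=
  SCayley2 _ (pi2 k) {z | ∃ i : Fin k, z = Pi.single i 1} {fun _ => 1}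

/-- `SPC°(k)`: the signed projective cube together with a positive loop at every vertex, i.e.
the signed Cayley graph `(ℤ₂ᵏ, {0, e₁, …, e_k}, {J})`. -/
def SPCo (k : ℕ) : SignedGraph (Fin k → ZMod 2) :=
  SCayley2 _ (pi2 k) ({z | z = 0} ∪ {z | ∃ i : Fin k, z = Pi.single i 1}) {fun _ => 1}

/-- The Hamming weight of a vector in `ℤ₂ⁿ`. -/
def wt {n : ℕ} (x : Fin n → ZMod 2) : ℕ := (Finset.univ.filter fun i => x i ≠ 0).card

end Cayley

section AuxLemmas

private lemma zmod2_ne_zero_iff : ∀ a : ZMod 2, a ≠ 0 ↔ a = 1 := by decide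

private lemma zmod2_eq_iff : ∀ a b : ZMod 2, ((a = 1) ↔ (b = 1)) ↔ a = b := by decide

private lemma zmod2_one_ne_zero : (1 : ZMod 2) ≠ 0 := by decide

end AuxLemmas

/-- a signed Cayley graph on `ℤ₂ᵏ` whose `k+1` difference-set elements are nonzero,
sum to zero, have no other linear dependency (no nonempty proper subset sums to zero), with an
odd number of negative ones, is switching-isomorphic to `SPC(k)`. -/
theorem cayley_switch_iso_spc (k : ℕ) (Sp Sn : Finset (Fin k → ZMod 2))
    (h0p : (0 : Fin k → ZMod 2) ∉ Sp) (h0n : (0 : Fin k → ZMod 2) ∉ Sn)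
    (hdisj : Disjoint Sp Sn)
    (hcard : (Sp ∪ Sn).card = k + 1)
    (hsum : ∑ x ∈ Sp ∪ Sn, x = 0)
    (hprop : ∀ T ⊆ Sp ∪ Sn, T.Nonempty → T ≠ Sp ∪ Sn → ∑ x ∈ T, x ≠ 0)
    (hodd : Odd Sn.card) :
    SignedGraph.SwitchIso (SCayley2 _ (pi2 k) ↑Sp ↑Sn) (SPC k) := by
  classical
  rcases Nat.eq_zero_or_pos k with hk0 | hk
  · exfalso
    subst hk0
    have hne : (Sp ∪ Sn).Nonempty := Finset.card_pos.mp (by rw [hcard]; omega)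
    obtain ⟨a, ha⟩ := hne
    have ha0 : a = 0 := funext fun i => i.elim0
    rcases Finset.mem_union.mp ha with h | h
    · exact h0p (ha0 ▸ h)
    · exact h0n (ha0 ▸ h)
  have hSnne : Sn.Nonempty := by
    rcases hodd with ⟨m, hm⟩
    exact Finset.card_pos.mp (by omega)
  obtain ⟨s₀, hs₀⟩ := hSnne
  have hs₀S : s₀ ∈ Sp ∪ Sn := Finset.mem_union_right _ hs₀
  set S' : Finset (Fin k → ZMod 2) := (Sp ∪ Sn).erase s₀ with hS'def
  have hS'card : S'.card = k := by
    rw [hS'def, Finset.card_erase_of_mem hs₀S, hcard]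
    omega
  have hS'sub : S' ⊆ Sp ∪ Sn := Finset.erase_subset _ _
  -- linear independence of `S'`
  have hli : LinearIndependent (ZMod 2) (fun i : ↥S' => (i : Fin k → ZMod 2)) := by
    rw [Fintype.linearIndependent_iff]
    intro g hg i
    by_contra hgi
    set F : Finset ↥S' := Finset.univ.filter (fun i => g i ≠ 0) with hFdef
    set T : Finset (Fin k → ZMod 2) := F.image Subtype.val with hTdef
    have hTsum : ∑ x ∈ T, x = 0 := by
      rw [hTdef, Finset.sum_image (fun a _ b _ h => Subtype.ext h)]
      calc ∑ j ∈ F, (j : Fin k → ZMod 2)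
          = ∑ j ∈ F, g j • (j : Fin k → ZMod 2) := by
            refine Finset.sum_congr rfl fun j hj => ?_
            rw [(zmod2_ne_zero_iff _).mp (Finset.mem_filter.mp hj).2, one_smul]
        _ = ∑ j : ↥S', g j • (j : Fin k → ZMod 2) := by
            refine Finset.sum_subset (Finset.subset_univ F) fun j _ hj => ?_
            have hj0 : g j = 0 := by
              by_contra h
              exact hj (Finset.mem_filter.mpr ⟨Finset.mem_univ _, h⟩)
            rw [hj0, zero_smul]
        _ = 0 := hg
    have hTS : T ⊆ Sp ∪ Sn := by
      intro x hx
      obtain ⟨j, _, rfl⟩ := Finset.mem_image.mp hx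
      exact hS'sub j.2
    have hTne : T.Nonempty :=
      ⟨i, Finset.mem_image.mpr ⟨i, Finset.mem_filter.mpr ⟨Finset.mem_univ _, hgi⟩, rfl⟩⟩
    have hTneS : T ≠ Sp ∪ Sn := by
      intro h
      have hs₀T : s₀ ∈ T := h ▸ hs₀S
      obtain ⟨j, _, hj⟩ := Finset.mem_image.mp hs₀T
      have hj2 : (j : Fin k → ZMod 2) ∈ (Sp ∪ Sn).erase s₀ := j.2
      rw [hj] at hj2
      exact (Finset.mem_erase.mp hj2).1 rfl
    exact hprop T hTS hTne hTneS hTsum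
  -- a basis made of the elements of `S'`
  have hS'ne : S'.Nonempty := Finset.card_pos.mp (by rw [hS'card]; exact hk)
  haveI : Nonempty ↥S' := ⟨⟨hS'ne.choose, hS'ne.choose_spec⟩⟩
  have hfinrank : Fintype.card ↥S' = Module.finrank (ZMod 2) (Fin k → ZMod 2) := by
    rw [Fintype.card_coe, hS'card, Module.finrank_pi, Fintype.card_fin]
  let b : Module.Basis ↥S' (ZMod 2) (Fin k → ZMod 2) :=
    basisOfLinearIndependentOfCardEqFinrank hli hfinrank
  have hb : ∀ i : ↥S', b i = (i : Fin k → ZMod 2) := fun i =>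
    congrFun (coe_basisOfLinearIndependentOfCardEqFinrank hli hfinrank) i
  have hcardk : Fintype.card ↥S' = k := by rw [Fintype.card_coe, hS'card]
  let e : ↥S' ≃ Fin k := Fintype.equivFinOfCardEq hcardk
  let φ : (Fin k → ZMod 2) ≃ₗ[ZMod 2] (Fin k → ZMod 2) :=
    b.equiv (Pi.basisFun (ZMod 2) (Fin k)) e
  have hφ : ∀ i : ↥S', φ (i : Fin k → ZMod 2) = Pi.single (e i) 1 := by
    intro i
    have h1 : φ (b i) = Pi.basisFun (ZMod 2) (Fin k) (e i) := b.equiv_apply i (Pi.basisFun _ _) e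
    rw [hb i] at h1
    rw [h1, Pi.basisFun_apply]
  -- `s₀` is the sum of the other elements and is mapped to the all-ones vector
  have hsum' : ∑ x ∈ S', x = s₀ := by
    have h1 : s₀ + ∑ x ∈ S', x = ∑ x ∈ Sp ∪ Sn, x :=
      Finset.add_sum_erase (Sp ∪ Sn) (fun x => x) hs₀S
    have h2 : s₀ + ∑ x ∈ S', x = 0 := by rw [h1, hsum]
    calc ∑ x ∈ S', x = (s₀ + s₀) + ∑ x ∈ S', x := by rw [pi2 k s₀, zero_add]
      _ = s₀ + (s₀ + ∑ x ∈ S', x) := by rw [add_assoc]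
      _ = s₀ := by rw [h2, add_zero]
  have hφs₀ : φ s₀ = fun _ => (1 : ZMod 2) := by
    have h4 : ∑ j : Fin k, Pi.single j (1 : ZMod 2) = fun _ => 1 := by
      funext i
      rw [Finset.sum_apply]
      simp [Pi.single_apply]
    calc φ s₀ = φ (∑ x ∈ S', x) := by rw [hsum']
      _ = ∑ x ∈ S', φ x := map_sum φ (fun x => x) S'
      _ = ∑ x ∈ S'.attach, φ (x : Fin k → ZMod 2) := (Finset.sum_attach S' (fun x => φ x)).symm
      _ = ∑ x ∈ S'.attach, Pi.single (e x) (1 : ZMod 2) := Finset.sum_congr rfl fun i _ => hφ i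
      _ = ∑ j : Fin k, Pi.single j (1 : ZMod 2) := by
          rw [← Finset.univ_eq_attach]
          exact Fintype.sum_equiv e (fun i => Pi.single (e i) 1) (fun j => Pi.single j 1)
            fun i => rfl
      _ = fun _ => 1 := h4
  -- the switching functional
  set N : Finset (Fin k) :=
    Finset.univ.filter (fun j => ((e.symm j : ↥S') : Fin k → ZMod 2) ∈ Sn) with hNdef
  set f : (Fin k → ZMod 2) → ZMod 2 := fun x => ∑ j ∈ N, x j with hfdef
  have hfsub : ∀ x y : Fin k → ZMod 2, f (x - y) = f x - f y := fun x y => by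
    show ∑ j ∈ N, (x - y) j = (∑ j ∈ N, x j) - ∑ j ∈ N, y j
    simp [Pi.sub_apply, Finset.sum_sub_distrib]
  have hfsingle : ∀ j : Fin k,
      f (Pi.single j 1) = if ((e.symm j : ↥S') : Fin k → ZMod 2) ∈ Sn then 1 else 0 := by
    intro j
    show ∑ j' ∈ N, Pi.single j (1 : ZMod 2) j' = _
    simp only [Pi.single_apply]
    rw [Finset.sum_ite_eq' N j (fun _ => (1 : ZMod 2))]
    by_cases hj : j ∈ N
    · rw [if_pos hj, if_pos (Finset.mem_filter.mp hj).2]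
    · rw [if_neg hj, if_neg (fun h => hj (Finset.mem_filter.mpr ⟨Finset.mem_univ _, h⟩))]
  have hNcard : N.card = Sn.card - 1 := by
    have hmem : ∀ x ∈ Sn.erase s₀, x ∈ S' := by
      intro x hx
      rcases Finset.mem_erase.mp hx with ⟨hx1, hx2⟩
      exact Finset.mem_erase.mpr ⟨hx1, Finset.mem_union_right _ hx2⟩
    have h1 : N.card = (Sn.erase s₀).card := by
      refine Finset.card_bij' (fun j _ => ((e.symm j : ↥S') : Fin k → ZMod 2))
        (fun x hx => e ⟨x, hmem x hx⟩) ?_ ?_ ?_ ?_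
      · intro j hj
        refine Finset.mem_erase.mpr ⟨?_, (Finset.mem_filter.mp hj).2⟩
        exact (Finset.mem_erase.mp (e.symm j).2).1
      · intro x hx
        refine Finset.mem_filter.mpr ⟨Finset.mem_univ _, ?_⟩
        rw [Equiv.symm_apply_apply]
        exact (Finset.mem_erase.mp hx).2
      · intro j hj
        exact e.apply_symm_apply j
      · intro x hx
        exact congrArg Subtype.val (e.symm_apply_apply ⟨x, hmem x hx⟩)
    rw [h1, Finset.card_erase_of_mem hs₀]
  have hfJ : f (fun _ => 1) = 0 := by
    show ∑ _j ∈ N, (1 : ZMod 2) = 0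
    rw [Finset.sum_const, nsmul_eq_mul, mul_one, hNcard]
    refine (ZMod.natCast_eq_zero_iff _ _).mpr ?_
    rcases hodd with ⟨m, hm⟩
    omega
  -- the values of `φ` and `f ∘ φ` on the difference sets
  have hmemS' : ∀ z (hz : z ∈ S'), φ z = Pi.single (e ⟨z, hz⟩) 1 := fun z hz => hφ ⟨z, hz⟩
  have hfz : ∀ z (hz : z ∈ S'), f (φ z) = if z ∈ Sn then 1 else 0 := by
    intro z hz
    rw [hmemS' z hz, hfsingle, Equiv.symm_apply_apply]
  have hP1' : ∀ z : Fin k → ZMod 2, (∃ i, φ z = Pi.single i 1) → z ∈ S' := by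
    rintro z ⟨i, hi⟩
    have h1 : φ ((e.symm i : ↥S') : Fin k → ZMod 2) = Pi.single i 1 := by
      rw [hφ, Equiv.apply_symm_apply]
    have h2 : z = ((e.symm i : ↥S') : Fin k → ZMod 2) := φ.injective (hi.trans h1.symm)
    rw [h2]
    exact (e.symm i).2
  have hP2' : ∀ z : Fin k → ZMod 2, φ z = (fun _ => 1) → z = s₀ := fun z h =>
    φ.injective (h.trans hφs₀.symm)
  -- the two key characterizations
  have key_pos : ∀ z : Fin k → ZMod 2,
      z ∈ Sp ↔ (((∃ i : Fin k, φ z = Pi.single i 1) ∧ f (φ z) = 0) ∨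
        ((φ z = fun _ => 1) ∧ ¬(f (φ z) = 0))) := by
    intro z
    constructor
    · intro hzp
      have hzs₀ : z ≠ s₀ := fun h => Finset.disjoint_left.mp hdisj hzp (h ▸ hs₀)
      have hzS' : z ∈ S' := Finset.mem_erase.mpr ⟨hzs₀, Finset.mem_union_left _ hzp⟩
      left
      refine ⟨⟨e ⟨z, hzS'⟩, hmemS' z hzS'⟩, ?_⟩
      rw [hfz z hzS', if_neg (fun h => Finset.disjoint_left.mp hdisj hzp h)]
    · rintro (⟨hP1, hQ⟩ | ⟨hP2, hQ⟩)
      · have hzS' := hP1' z hP1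
        rcases Finset.mem_union.mp (hS'sub hzS') with h | h
        · exact h
        · rw [hfz z hzS', if_pos h] at hQ
          exact absurd hQ zmod2_one_ne_zero
      · exact absurd (by rw [hP2]; exact hfJ) hQ
  have key_neg : ∀ z : Fin k → ZMod 2,
      z ∈ Sn ↔ (((φ z = fun _ => 1) ∧ f (φ z) = 0) ∨
        ((∃ i : Fin k, φ z = Pi.single i 1) ∧ ¬(f (φ z) = 0))) := by
    intro z
    constructor
    · intro hzn
      by_cases hzs : z = s₀
      · subst hzs
        exact Or.inl ⟨hφs₀, by rw [hφs₀]; exact hfJ⟩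
      · have hzS' : z ∈ S' := Finset.mem_erase.mpr ⟨hzs, Finset.mem_union_right _ hzn⟩
        refine Or.inr ⟨⟨e ⟨z, hzS'⟩, hmemS' z hzS'⟩, ?_⟩
        rw [hfz z hzS', if_pos hzn]
        exact zmod2_one_ne_zero
    · rintro (⟨hP2, _⟩ | ⟨hP1, hQ⟩)
      · rw [hP2' z hP2]; exact hs₀
      · have hzS' := hP1' z hP1
        rcases Finset.mem_union.mp (hS'sub hzS') with h | h
        · rw [hfz z hzS', if_neg (fun hn => Finset.disjoint_left.mp hdisj h hn)] at hQ
          exact absurd rfl hQ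
        · exact h
  -- assembling the switching isomorphism
  refine ⟨{v | f v = 1}, φ.toEquiv, fun x y => ?_, fun x y => ?_⟩
  · have hw2 : φ x - φ y = φ (x - y) := (map_sub φ x y).symm
    have hIff' : ((f (φ x) = 1) ↔ (f (φ y) = 1)) ↔ (f (φ (x - y)) = 0) := by
      rw [zmod2_eq_iff (f (φ x)) (f (φ y)), ← sub_eq_zero, ← hfsub (φ x) (φ y), hw2]
    show (x - y ∈ Sp) ↔
      (((∃ i : Fin k, φ x - φ y = Pi.single i 1) ∧ ((f (φ x) = 1) ↔ (f (φ y) = 1))) ∨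
       ((φ x - φ y = fun _ => 1) ∧ ¬((f (φ x) = 1) ↔ (f (φ y) = 1))))
    rw [hw2, hIff']
    exact key_pos (x - y)
  · have hw2 : φ x - φ y = φ (x - y) := (map_sub φ x y).symm
    have hIff' : ((f (φ x) = 1) ↔ (f (φ y) = 1)) ↔ (f (φ (x - y)) = 0) := by
      rw [zmod2_eq_iff (f (φ x)) (f (φ y)), ← sub_eq_zero, ← hfsub (φ x) (φ y), hw2]
    show (x - y ∈ Sn) ↔
      (((φ x - φ y = fun _ => 1) ∧ ((f (φ x) = 1) ↔ (f (φ y) = 1))) ∨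
       ((∃ i : Fin k, φ x - φ y = Pi.single i 1) ∧ ¬((f (φ x) = 1) ↔ (f (φ y) = 1))))
    rw [hw2, hIff']
    exact key_neg (x - y)
end

section
/- For n ≥ 2, consider the signed Cayley graph on Z_2^{n+1} with positive difference set S⁺ = {e_1+e_2, e_2+e_3, …, e_n+e_{n+1}} and negative difference set S⁻ = {e_{n+1}+e_1} (this is the power graph of the negative cycle of length n+1). It has exactly two connected components, one induced on the vectors of even Hamming weight and one on the vectors of odd Hamming weight, and each component is isomorphic as a signed graph to the signed projective cube SPC(n). -/
universe u v

/-- The power graph of the negative cycle of length `n+1`: the signed Cayley graph on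
`ℤ₂^(n+1)` with positive difference set `{e₁+e₂, …, e_n+e_(n+1)}` and negative difference set
`{e_(n+1)+e₁}`. -/
def powNegCycle (n : ℕ) : SignedGraph (Fin (n+1) → ZMod 2) :=
  SCayley2 _ (pi2 (n+1))
    {z | ∃ i : Fin n, z = Pi.single i.castSucc 1 + Pi.single i.succ 1}
    {z | z = Pi.single (Fin.last n) 1 + Pi.single 0 1}

namespace PNCAux

variable {n : ℕ}

lemma zmod2_cases : ∀ c : ZMod 2, c = 0 ∨ c = 1 := by decide

lemma zmod2_eq_iff : ∀ a b : ZMod 2, a = b ↔ (a = 0 ↔ b = 0) := by decide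

/-- Extension of a vector in `ℤ₂^(n+1)` to a function on `ℕ`. -/
def ext' (n : ℕ) (x : Fin (n+1) → ZMod 2) (k : ℕ) : ZMod 2 :=
  if h : k < n+1 then x ⟨k, h⟩ else 0

lemma ext'_add (x y : Fin (n+1) → ZMod 2) (k : ℕ) :
    ext' n (x + y) k = ext' n x k + ext' n y k := by
  unfold ext'; split <;> simp

lemma ext'_val (x : Fin (n+1) → ZMod 2) (j : Fin (n+1)) : ext' n x j.1 = x j := by
  unfold ext'; rw [dif_pos j.isLt]

/-- The partial-sum linear map. -/
def phi (n : ℕ) : (Fin (n+1) → ZMod 2) →+ (Fin n → ZMod 2) :=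
  AddMonoidHom.mk' (fun x j => ∑ k ∈ Finset.range (j.1+1), ext' n x k) (by
    intro x y; funext j
    simp [ext'_add, Finset.sum_add_distrib])

/-- The total-sum map, giving the parity of the Hamming weight. -/
def sgn (n : ℕ) : (Fin (n+1) → ZMod 2) →+ ZMod 2 :=
  AddMonoidHom.mk' (fun x => ∑ k, x k) (by intro x y; simp [Finset.sum_add_distrib])

lemma sum_range_ext' (x : Fin (n+1) → ZMod 2) :
    ∑ k ∈ Finset.range (n+1), ext' n x k = sgn n x := by
  rw [← Fin.sum_univ_eq_sum_range]
  show _ = ∑ k, x k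
  exact Finset.sum_congr rfl fun k _ => ext'_val x k

lemma eq_zero_of_phi_sgn (x : Fin (n+1) → ZMod 2)
    (h1 : phi n x = 0) (h2 : sgn n x = 0) : x = 0 := by
  have hS : ∀ m : ℕ, m ≤ n+1 → ∑ k ∈ Finset.range m, ext' n x k = 0 := by
    intro m hm
    rcases Nat.lt_or_ge m (n+1) with hm' | hm'
    · match m, hm' with
      | 0, _ => simp
      | (m+1), hm' =>
        have := congrFun h1 ⟨m, by omega⟩
        simpa [phi] using this
    · have : m = n+1 := le_antisymm hm hm'
      rw [this, sum_range_ext', h2]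
  funext j
  have h3 := hS (j.1+1) (by omega)
  have h4 := hS j.1 (by omega)
  rw [Finset.sum_range_succ, h4, zero_add, ext'_val] at h3
  simpa using h3

lemma pair_inj {x y : Fin (n+1) → ZMod 2}
    (h1 : phi n x = phi n y) (h2 : sgn n x = sgn n y) : x = y := by
  have := eq_zero_of_phi_sgn (x - y)
    (by rw [map_sub, h1, sub_self]) (by rw [map_sub, h2, sub_self])
  exact sub_eq_zero.mp this

lemma ext'_single (a : Fin (n+1)) (c : ZMod 2) (k : ℕ) :
    ext' n (Pi.single a c) k = if k = a.1 then c else 0 := by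
  unfold ext'
  rcases Nat.lt_or_ge k (n+1) with h | h
  · rw [dif_pos h, Pi.single_apply]
    by_cases hk : k = a.1
    · rw [if_pos hk, if_pos (Fin.ext hk)]
    · rw [if_neg hk, if_neg (fun hh => hk (congrArg Fin.val hh))]
  · rw [dif_neg (Nat.not_lt.mpr h), if_neg (by have := a.isLt; omega)]

lemma phi_single (a : Fin (n+1)) (c : ZMod 2) (j : Fin n) :
    phi n (Pi.single a c) j = if a.1 ≤ j.1 then c else 0 := by
  show ∑ k ∈ Finset.range (j.1+1), ext' n (Pi.single a c) k = _
  simp only [ext'_single]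
  rw [Finset.sum_ite_eq' (Finset.range (j.1+1)) a.1 (fun _ => c)]
  simp [Nat.lt_succ_iff]

lemma sgn_single (a : Fin (n+1)) (c : ZMod 2) : sgn n (Pi.single a c) = c := by
  show (∑ k, (Pi.single a c : Fin (n+1) → ZMod 2) k) = c
  simp [Finset.sum_pi_single']

/-- The positive generators. -/
def gp (n : ℕ) (i : Fin n) : Fin (n+1) → ZMod 2 :=
  Pi.single i.castSucc 1 + Pi.single i.succ 1

/-- The negative generator. -/
def gneg (n : ℕ) : Fin (n+1) → ZMod 2 :=
  Pi.single (Fin.last n) 1 + Pi.single 0 1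

lemma phi_gp (i : Fin n) : phi n (gp n i) = Pi.single i 1 := by
  funext j
  rw [gp, map_add, Pi.add_apply, phi_single, phi_single, Pi.single_apply,
    Fin.coe_castSucc, Fin.val_succ]
  rcases lt_trichotomy j.1 i.1 with h | h | h
  · rw [if_neg (by omega), if_neg (by omega), if_neg (by
      intro hji; exact absurd (congrArg Fin.val hji) (by omega)), add_zero]
  · rw [if_pos (by omega), if_neg (by omega), if_pos (Fin.ext h), add_zero]
  · rw [if_pos (by omega), if_pos (by omega), if_neg (by
      intro hji; exact absurd (congrArg Fin.val hji) (by omega))]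
    decide
lemma phi_gneg : phi n (gneg n) = fun _ => 1 := by
  funext j
  rw [gneg, map_add, Pi.add_apply, phi_single, phi_single, Fin.val_last, Fin.val_zero]
  rw [if_neg (by have := j.isLt; omega), if_pos (Nat.zero_le _), zero_add]

lemma sgn_gp (i : Fin n) : sgn n (gp n i) = 0 := by
  rw [gp, map_add, sgn_single, sgn_single]; decide

lemma sgn_gneg : sgn n (gneg n) = 0 := by
  rw [gneg, map_add, sgn_single, sgn_single]; decide

lemma sgn_eq_wt (x : Fin (n+1) → ZMod 2) : sgn n x = (wt x : ZMod 2) := by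
  unfold wt
  rw [Finset.card_filter]
  push_cast
  show ∑ k, x k = _
  refine Finset.sum_congr rfl fun k _ => ?_
  have : ∀ a : ZMod 2, a = if a ≠ 0 then 1 else 0 := by decide
  exact this (x k)

lemma even_wt_iff (x : Fin (n+1) → ZMod 2) : Even (wt x) ↔ sgn n x = 0 := by
  rw [sgn_eq_wt, ZMod.natCast_eq_zero_iff, even_iff_two_dvd]

lemma smul_single {m : ℕ} (c : ZMod 2) (a : Fin m) :
    c • (Pi.single a 1 : Fin m → ZMod 2) = (Pi.single a c : Fin m → ZMod 2) := by
  funext j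
  rw [Pi.smul_apply, Pi.single_apply, Pi.single_apply]
  split <;> simp

lemma phi_smul (c : ZMod 2) (x : Fin (n+1) → ZMod 2) :
    phi n (c • x) = c • phi n x := by
  rcases zmod2_cases c with h | h <;> subst h <;> simp

lemma sgn_smul (c : ZMod 2) (x : Fin (n+1) → ZMod 2) :
    sgn n (c • x) = c • sgn n x := by
  rcases zmod2_cases c with h | h <;> subst h <;> simp

noncomputable def walk_translate {u v : Fin (n+1) → ZMod 2} (c : Fin (n+1) → ZMod 2)
    (p : (powNegCycle n).Walk u v) : (powNegCycle n).Walk (u+c) (v+c) := by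
  induction p with
  | nil v => exact .nil _
  | consPos h p ih =>
      exact .consPos (by
        show _ - _ ∈ _
        rw [add_sub_add_right_eq_sub]
        exact h) ih
  | consNeg h p ih =>
      exact .consNeg (by
        show _ - _ ∈ _
        rw [add_sub_add_right_eq_sub]
        exact h) ih

lemma sgn_edge_pos {x y : Fin (n+1) → ZMod 2} (h : (powNegCycle n).pos x y) :
    sgn n x = sgn n y := by
  obtain ⟨i, hi⟩ := h
  have : sgn n (x - y) = 0 := by rw [hi]; exact sgn_gp i
  rw [map_sub, sub_eq_zero] at this
  exact this

lemma sgn_edge_neg {x y : Fin (n+1) → ZMod 2} (h : (powNegCycle n).neg x y) :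
    sgn n x = sgn n y := by
  have : sgn n (x - y) = 0 := by
    rw [show x - y = gneg n from h]; exact sgn_gneg
  rw [map_sub, sub_eq_zero] at this
  exact this

lemma sgn_walk {u v : Fin (n+1) → ZMod 2} (p : (powNegCycle n).Walk u v) :
    sgn n u = sgn n v := by
  induction p with
  | nil v => rfl
  | consPos h p ih => exact (sgn_edge_pos h).trans ih
  | consNeg h p ih => exact (sgn_edge_neg h).trans ih

lemma pos_zero_gp (i : Fin n) : (powNegCycle n).pos 0 (gp n i) := by
  show (0 : Fin (n+1) → ZMod 2) - gp n i ∈ _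
  rw [zero_sub, neg_eq_of_add_eq_zero_left (pi2 _ (gp n i))]
  exact ⟨i, rfl⟩

/-- The set of vertices reachable from `0`, as a subgroup. -/
def T (n : ℕ) : AddSubgroup (Fin (n+1) → ZMod 2) where
  carrier := {z | Nonempty ((powNegCycle n).Walk 0 z)}
  zero_mem' := ⟨.nil 0⟩
  add_mem' := by
    rintro a b ⟨p⟩ ⟨q⟩
    have q' := walk_translate a q
    rw [zero_add, add_comm b a] at q'
    exact ⟨p.append q'⟩
  neg_mem' := by
    rintro a ⟨p⟩
    show -a ∈ _
    rw [neg_eq_of_add_eq_zero_left (pi2 _ a)]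
    exact ⟨p⟩

lemma gp_mem (i : Fin n) : gp n i ∈ T n := ⟨.consPos (pos_zero_gp i) (.nil _)⟩

lemma mem_T_of_sgn {z : Fin (n+1) → ZMod 2} (hz : sgn n z = 0) : z ∈ T n := by
  have hrepr : z = ∑ i : Fin n, (phi n z i) • gp n i := by
    apply pair_inj
    · rw [map_sum]
      have : ∀ i : Fin n, phi n ((phi n z i) • gp n i) = Pi.single i (phi n z i) := by
        intro i
        rw [phi_smul, phi_gp, smul_single]
      rw [Finset.sum_congr rfl fun i _ => this i, Finset.univ_sum_single]
    · rw [map_sum, hz]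
      refine (Finset.sum_eq_zero fun i _ => ?_).symm
      rw [sgn_smul, sgn_gp, smul_zero]
  rw [hrepr]
  refine AddSubgroup.sum_mem _ fun i _ => ?_
  rcases zmod2_cases (phi n z i) with h | h <;> rw [h]
  · rw [zero_smul]; exact (T n).zero_mem
  · rw [one_smul]; exact gp_mem i

lemma reach_iff (u v : Fin (n+1) → ZMod 2) :
    Nonempty ((powNegCycle n).Walk u v) ↔ sgn n u = sgn n v := by
  constructor
  · rintro ⟨p⟩; exact sgn_walk p
  · intro h
    have : sgn n (u - v) = 0 := by rw [map_sub, h, sub_self]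
    obtain ⟨p⟩ := mem_T_of_sgn this
    have p' := walk_translate v p
    rw [zero_add, sub_add_cancel] at p'
    exact ⟨p'.reverse⟩

lemma iso_comp (c : ZMod 2) :
    SignedGraph.Iso ((powNegCycle n).induce {x | sgn n x = c}) (SPC n) := by
  have hbij : Function.Bijective
      (fun x : {x : Fin (n+1) → ZMod 2 | sgn n x = c} => phi n x.1) := by
    constructor
    · rintro ⟨a, ha⟩ ⟨b, hb⟩ h
      exact Subtype.ext (pair_inj h (ha.trans hb.symm))
    · intro y
      refine ⟨⟨(∑ i, y i • gp n i) + Pi.single (Fin.last n) c, ?_⟩, ?_⟩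
      · show sgn n _ = c
        rw [map_add, sgn_single, map_sum]
        rw [Finset.sum_eq_zero fun i _ => by rw [sgn_smul, sgn_gp, smul_zero], zero_add]
      · show phi n _ = y
        rw [map_add, map_sum]
        have h1 : ∀ i : Fin n, phi n (y i • gp n i) = Pi.single i (y i) := fun i => by
          rw [phi_smul, phi_gp, smul_single]
        have h2 : phi n (Pi.single (Fin.last n) c) = 0 := by
          funext j
          rw [phi_single, Fin.val_last, if_neg (by have := j.isLt; omega)]
          rfl
        rw [Finset.sum_congr rfl fun i _ => h1 i, Finset.univ_sum_single, h2, add_zero]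
  refine ⟨Equiv.ofBijective _ hbij, ?_, ?_⟩
  · rintro ⟨a, ha⟩ ⟨b, hb⟩
    show (powNegCycle n).pos a b ↔ (SPC n).pos _ _
    constructor
    · rintro ⟨i, hi⟩
      exact ⟨i, by rw [Equiv.ofBijective_apply, Equiv.ofBijective_apply,
        ← map_sub, hi, ← gp, phi_gp]⟩
    · rintro ⟨i, hi⟩
      refine ⟨i, ?_⟩
      rw [Equiv.ofBijective_apply, Equiv.ofBijective_apply, ← map_sub] at hi
      show a - b = gp n i
      refine pair_inj (hi.trans (phi_gp i).symm) ?_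
      rw [map_sub, ha, hb, sub_self, sgn_gp]
  · rintro ⟨a, ha⟩ ⟨b, hb⟩
    show (powNegCycle n).neg a b ↔ (SPC n).neg _ _
    constructor
    · intro h
      show _ ∈ ({fun _ => 1} : Set (Fin n → ZMod 2))
      rw [Set.mem_singleton_iff, Equiv.ofBijective_apply, Equiv.ofBijective_apply,
        ← map_sub, show a - b = gneg n from h, phi_gneg]
    · intro h
      have hi : phi n a - phi n b = fun _ => (1 : ZMod 2) :=
        Set.mem_singleton_iff.mp h
      show a - b = gneg n
      rw [← map_sub] at hi
      refine pair_inj (hi.trans phi_gneg.symm) ?_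
      rw [map_sub, ha, hb, sub_self, sgn_gneg]

end PNCAux

/-- the power graph of the negative `(n+1)`-cycle has exactly two connected
components, induced on the even- and odd-Hamming-weight vectors, each isomorphic to `SPC(n)`. -/
theorem powNegCycle_components (n : ℕ) (hn : 2 ≤ n) :
    (∀ u v : Fin (n+1) → ZMod 2,
      Nonempty ((powNegCycle n).Walk u v) ↔ (Even (wt u) ↔ Even (wt v))) ∧
    Nat.card (Quotient (SignedGraph.reachSetoid (powNegCycle n))) = 2 ∧
    SignedGraph.Iso ((powNegCycle n).induce {x | Even (wt x)}) (SPC n) ∧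
    SignedGraph.Iso ((powNegCycle n).induce {x | ¬ Even (wt x)}) (SPC n) := by
  clear hn
  refine ⟨fun u v => ?_, ?_, ?_, ?_⟩
  · rw [PNCAux.reach_iff, PNCAux.even_wt_iff, PNCAux.even_wt_iff,
      PNCAux.zmod2_eq_iff (PNCAux.sgn n u) (PNCAux.sgn n v)]
  · have key : ∀ a b : Fin (n+1) → ZMod 2,
        (SignedGraph.reachSetoid (powNegCycle n)).r a b → PNCAux.sgn n a = PNCAux.sgn n b :=
      fun a b h => (PNCAux.reach_iff a b).mp h
    have e : Quotient (SignedGraph.reachSetoid (powNegCycle n)) ≃ ZMod 2 := by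
      refine Equiv.ofBijective (Quotient.lift (fun x => PNCAux.sgn n x) key) ⟨?_, ?_⟩
      · intro q1 q2
        induction q1 using Quotient.inductionOn with | h a =>
        induction q2 using Quotient.inductionOn with | h b =>
        intro h
        exact Quotient.sound ((PNCAux.reach_iff a b).mpr h)
      · intro c
        exact ⟨⟦Pi.single 0 c⟧, PNCAux.sgn_single 0 c⟩
    rw [Nat.card_congr e, Nat.card_eq_fintype_card, ZMod.card]
  · have hset : {x : Fin (n+1) → ZMod 2 | Even (wt x)} = {x | PNCAux.sgn n x = 0} :=
      Set.ext fun x => PNCAux.even_wt_iff x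
    rw [hset]
    exact PNCAux.iso_comp 0
  · have hset : {x : Fin (n+1) → ZMod 2 | ¬ Even (wt x)} = {x | PNCAux.sgn n x = 1} := by
      refine Set.ext fun x => ?_
      rw [Set.mem_setOf_eq, Set.mem_setOf_eq, PNCAux.even_wt_iff]
      have : ∀ a : ZMod 2, ¬ a = 0 ↔ a = 1 := by decide
      exact this _
    rw [hset]
    exact PNCAux.iso_comp 1
end

section
/- Let u ≠ v be vertices of the signed projective cube SPC(k) and let h be the Hamming weight of u − v. Then the minimum length of a walk from u to v containing an even number of negative edges is h, the minimum length of a walk from u to v containing an odd number of negative edges is k+1−h, and consequently the distance between u and v in the underlying graph PC(k) is min{h, k+1−h}. -/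
universe u v

lemma pisub {k : ℕ} (x y : Fin k → ZMod 2) : x - y = x + y := by
  funext i
  have h : ∀ a b : ZMod 2, a - b = a + b := by decide
  exact h _ _

lemma wt_le {k : ℕ} (x : Fin k → ZMod 2) : wt x ≤ k :=
  (Finset.card_filter_le _ _).trans (by simp)

lemma wt_zero_iff {k : ℕ} (x : Fin k → ZMod 2) : wt x = 0 ↔ x = 0 := by
  simp [wt, Finset.card_eq_zero, Finset.filter_eq_empty_iff, funext_iff]

lemma wt_add_le {k : ℕ} (x y : Fin k → ZMod 2) : wt (x + y) ≤ wt x + wt y := by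
  classical
  have hsub : Finset.filter (fun i => (x+y) i ≠ 0) Finset.univ ⊆
      Finset.filter (fun i => x i ≠ 0) Finset.univ ∪ Finset.filter (fun i => y i ≠ 0) Finset.univ := by
    intro i hi
    simp only [Finset.mem_filter, Finset.mem_union, Finset.mem_univ, true_and, Pi.add_apply] at *
    by_contra hc
    push_neg at hc
    simp [hc.1, hc.2] at hi
  calc wt (x+y) ≤ _ := Finset.card_le_card hsub
    _ ≤ _ := Finset.card_union_le _ _

lemma wt_add_J {k : ℕ} (x : Fin k → ZMod 2) : wt (x + fun _ => (1:ZMod 2)) = k - wt x := by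
  classical
  have h : Finset.filter (fun i => ((x + fun _ => (1:ZMod 2)) : Fin k → ZMod 2) i ≠ 0) Finset.univ
      = Finset.filter (fun i => ¬ x i ≠ 0) Finset.univ := by
    apply Finset.filter_congr
    intro i _
    have h2 : ∀ a : ZMod 2, (a + 1 ≠ 0) ↔ ¬ a ≠ 0 := by decide
    simpa using h2 (x i)
  have h2 := Finset.card_filter_add_card_filter_not
    (s := (Finset.univ : Finset (Fin k))) (p := fun i => x i ≠ 0)
  have hk : (Finset.univ : Finset (Fin k)).card = k := by simp
  have h3 : wt (x + fun _ => (1:ZMod 2)) = (Finset.filter (fun i => ¬ x i ≠ 0) Finset.univ).card := by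
    rw [wt, h]
  rw [h3]
  unfold wt
  omega

lemma wt_single {k : ℕ} (i : Fin k) : wt (Pi.single i (1 : ZMod 2)) = 1 := by
  classical
  have h : Finset.filter (fun j => (Pi.single i (1:ZMod 2) : Fin k → ZMod 2) j ≠ 0) Finset.univ = {i} := by
    ext j
    by_cases hj : j = i <;> simp [Pi.single_apply, hj]
  rw [wt, h, Finset.card_singleton]

lemma wt_flip {k : ℕ} (x : Fin k → ZMod 2) (i : Fin k) (hx : x i ≠ 0) :
    wt (x + Pi.single i (1:ZMod 2)) + 1 = wt x := by
  classical
  have hx1 : x i = 1 := by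
    have h0 : ∀ a : ZMod 2, a ≠ 0 → a = 1 := by decide
    exact h0 _ hx
  have h : Finset.filter (fun j => ((x + Pi.single i (1:ZMod 2)) : Fin k → ZMod 2) j ≠ 0) Finset.univ
      = (Finset.filter (fun j => x j ≠ 0) Finset.univ).erase i := by
    ext j
    by_cases hj : j = i
    · subst hj; simp [Pi.single_apply, hx1]; decide
    · simp [Pi.single_apply, hj]
  rw [wt, h, Finset.card_erase_of_mem (by simp [hx]), wt]
  have hp : 0 < (Finset.filter (fun j => x j ≠ 0) Finset.univ).card :=
    Finset.card_pos.mpr ⟨i, by simp [hx]⟩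
  omega

lemma spc_lower (k : ℕ) : ∀ {u v : Fin k → ZMod 2} (p : (SPC k).Walk u v),
    (Even p.negCount → wt (u - v) ≤ p.length) ∧
    (Odd p.negCount → k + 1 ≤ p.length + wt (u - v)) := by
  intro u v p
  induction p with
  | nil w =>
    refine ⟨fun _ => ?_, fun ho => ?_⟩
    · simp [SignedGraph.Walk.length, sub_self, (wt_zero_iff (0 : Fin k → ZMod 2)).mpr rfl]
    · simp only [SignedGraph.Walk.negCount, Nat.odd_iff] at ho
      omega
  | @consPos a b c h p ih =>
    obtain ⟨i, hi⟩ : ∃ i, a - b = Pi.single i 1 := h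
    have hab : wt (a - b) = 1 := by rw [hi]; exact wt_single i
    have hba : b - a = a - b := by rw [pisub, pisub, add_comm]
    have key1 : wt (a - c) ≤ wt (b - c) + 1 := by
      have hsum : a - c = (a - b) + (b - c) := (sub_add_sub_cancel a b c).symm
      calc wt (a - c) ≤ wt (a - b) + wt (b - c) := hsum ▸ wt_add_le _ _
        _ = wt (b - c) + 1 := by omega
    have key2 : wt (b - c) ≤ wt (a - c) + 1 := by
      have hsum : b - c = (a - b) + (a - c) := by
        rw [← hba]; exact (sub_add_sub_cancel b a c).symm
      calc wt (b - c) ≤ wt (a - b) + wt (a - c) := hsum ▸ wt_add_le _ _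
        _ = wt (a - c) + 1 := by omega
    simp only [SignedGraph.Walk.negCount, SignedGraph.Walk.length]
    refine ⟨fun he => ?_, fun ho => ?_⟩
    · have := ih.1 he; omega
    · have := ih.2 ho; omega
  | @consNeg a b c h p ih =>
    have hab : a - b = fun _ => (1 : ZMod 2) := h
    have hba : b - a = a - b := by rw [pisub, pisub, add_comm]
    have hsum : b - c = (a - c) + (a - b) := by
      rw [pisub, pisub, pisub]
      have h2 : a + a = 0 := pi2 k a
      calc b + c = (a + a) + (c + b) := by rw [h2, zero_add, add_comm]
        _ = (a + c) + (a + b) := add_add_add_comm a a c b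
    rw [hab] at hsum
    have hw : wt (b - c) = k - wt (a - c) := by rw [hsum, wt_add_J]
    have hle : wt (a - c) ≤ k := wt_le _
    simp only [SignedGraph.Walk.negCount, SignedGraph.Walk.length]
    refine ⟨fun he => ?_, fun ho => ?_⟩
    · have hpo : Odd p.negCount := by
        rw [Nat.even_iff] at he; rw [Nat.odd_iff]; omega
      have := ih.2 hpo; omega
    · have hpe : Even p.negCount := by
        rw [Nat.odd_iff] at ho; rw [Nat.even_iff]; omega
      have := ih.1 hpe; omega

lemma spc_pos_walk (k : ℕ) : ∀ (n : ℕ) (u v : Fin k → ZMod 2), wt (u - v) = n →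
    ∃ p : (SPC k).Walk u v, p.negCount = 0 ∧ p.length = n := by
  intro n
  induction n with
  | zero =>
    intro u v h
    have huv : u = v := sub_eq_zero.mp ((wt_zero_iff _).mp h)
    subst huv
    exact ⟨.nil u, rfl, rfl⟩
  | succ n ih =>
    intro u v h
    have hne : (Finset.univ.filter fun i => (u - v) i ≠ 0).Nonempty := by
      rw [← Finset.card_pos]; unfold wt at h; omega
    obtain ⟨i, hi⟩ := hne
    simp only [Finset.mem_filter, Finset.mem_univ, true_and] at hi
    have hwv : wt ((u + Pi.single i (1:ZMod 2)) - v) = n := by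
      have hsum : (u + Pi.single i (1:ZMod 2)) - v = (u - v) + Pi.single i 1 := by
        rw [pisub, pisub]; exact add_right_comm u _ v
      rw [hsum]
      have := wt_flip (u - v) i hi
      omega
    obtain ⟨p, hp0, hpl⟩ := ih _ v hwv
    have hedge : (SPC k).pos u (u + Pi.single i (1:ZMod 2)) := by
      show u - (u + Pi.single i (1:ZMod 2)) ∈ _
      have hdiff : u - (u + Pi.single i (1:ZMod 2)) = Pi.single i 1 := by
        rw [pisub, ← add_assoc, pi2 k u, zero_add]
      exact ⟨i, hdiff⟩
    exact ⟨.consPos hedge p,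
      by simp [SignedGraph.Walk.negCount, hp0],
      by simp [SignedGraph.Walk.length, hpl]⟩

lemma spc_odd_walk (k : ℕ) (u v : Fin k → ZMod 2) :
    ∃ p : (SPC k).Walk u v, p.negCount = 1 ∧ p.length = k + 1 - wt (u - v) := by
  have hedge : (SPC k).neg u (u + fun _ => (1:ZMod 2)) := by
    show u - (u + fun _ => (1:ZMod 2)) ∈ _
    have hdiff : u - (u + fun _ => (1:ZMod 2)) = fun _ => (1:ZMod 2) := by
      rw [pisub, ← add_assoc, pi2 k u, zero_add]
    rw [hdiff]
    rfl
  have hwv : wt ((u + fun _ => (1:ZMod 2)) - v) = k - wt (u - v) := by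
    have hsum : (u + fun _ => (1:ZMod 2)) - v = (u - v) + fun _ => (1:ZMod 2) := by
      rw [pisub, pisub]; exact add_right_comm u _ v
    rw [hsum, wt_add_J]
  obtain ⟨p, hp0, hpl⟩ := spc_pos_walk k _ _ v hwv
  refine ⟨.consNeg hedge p, by simp [SignedGraph.Walk.negCount, hp0], ?_⟩
  have := wt_le (u - v)
  simp only [SignedGraph.Walk.length, hpl]
  omega

/-- for distinct vertices `u, v` of `SPC(k)` with `h = wt(u-v)`, the shortest
`u-v` walk with an even number of negative edges has length `h`, the shortest one with an odd
number of negative edges has length `k+1-h`, and the distance in `PC(k)` is the minimum of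
the two. -/
theorem spc_distances (k : ℕ) (u v : Fin k → ZMod 2) (huv : u ≠ v) :
    sInf {n : ℕ∞ | ∃ p : (SPC k).Walk u v, Even p.negCount ∧ (p.length : ℕ∞) = n}
        = (wt (u - v) : ℕ∞) ∧
    sInf {n : ℕ∞ | ∃ p : (SPC k).Walk u v, Odd p.negCount ∧ (p.length : ℕ∞) = n}
        = ((k + 1 - wt (u - v) : ℕ) : ℕ∞) ∧
    sInf {n : ℕ∞ | ∃ p : (SPC k).Walk u v, (p.length : ℕ∞) = n}
        = min ((wt (u - v) : ℕ)) ((k + 1 - wt (u - v) : ℕ)) := by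
  obtain ⟨pe, hpe0, hpel⟩ := spc_pos_walk k (wt (u - v)) u v rfl
  obtain ⟨po, hpo1, hpol⟩ := spc_odd_walk k u v
  have hoddpo : Odd po.negCount := by rw [hpo1]; exact odd_one
  have hevenpe : Even pe.negCount := by rw [hpe0]; exact Even.zero
  refine ⟨le_antisymm ?_ ?_, le_antisymm ?_ ?_, le_antisymm ?_ ?_⟩
  · exact sInf_le ⟨pe, hevenpe, by rw [hpel]⟩
  · refine le_sInf ?_
    rintro n ⟨p, hp, rfl⟩
    exact Nat.cast_le.mpr ((spc_lower k p).1 hp)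
  · exact sInf_le ⟨po, hoddpo, by rw [hpol]⟩
  · refine le_sInf ?_
    rintro n ⟨p, hp, rfl⟩
    have := (spc_lower k p).2 hp
    exact Nat.cast_le.mpr (by omega)
  · rcases le_total (wt (u - v)) (k + 1 - wt (u - v)) with hm | hm
    · rw [min_eq_left hm]; exact sInf_le ⟨pe, by rw [hpel]⟩
    · rw [min_eq_right hm]; exact sInf_le ⟨po, by rw [hpol]⟩
  · refine le_sInf ?_
    rintro n ⟨p, rfl⟩
    refine Nat.cast_le.mpr ?_
    rcases Nat.even_or_odd p.negCount with hp | hp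
    · exact (min_le_left _ _).trans ((spc_lower k p).1 hp)
    · refine (min_le_right _ _).trans ?_
      have := (spc_lower k p).2 hp
      omega
end

section
/- For i ≥ 1, present the projective cube PC(2i) as the graph whose vertices are the unordered pairs {A, Ā} of complementary subsets of a (2i+1)-element set, where {A, Ā} and {B, B̄} are adjacent if and only if the symmetric difference of A and B, or the symmetric difference of A and B̄, has exactly one element. Then the subgraph induced by the vertices {A, Ā} with |A| = i is isomorphic to the Kneser graph K(2i+1, i). -/
open scoped symmDiff

lemma card_symmDiff' {α : Type*} [DecidableEq α] (s t : Finset α) :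
    (s ∆ t).card = (s \ t).card + (t \ s).card := by
  rw [symmDiff_def, Finset.sup_eq_union,
    Finset.card_union_of_disjoint (disjoint_sdiff_sdiff)]

/-- in the poset presentation of `PC(2i)`, whose vertices are the unordered pairs
`{A, Ā}` of complementary subsets of a `(2i+1)`-set (each pair with `|A| = i` being recorded by
its member of size `i`) and whose adjacency relation is "the symmetric difference of `A` and
`B`, or of `A` and `B̄`, is a singleton", the subgraph induced on the vertices `{A, Ā}` with
`|A| = i` is isomorphic to the Kneser graph `K(2i+1, i)` (whose vertices are the `i`-subsets of
a `(2i+1)`-set, two of them adjacent iff they are disjoint). -/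
theorem pc_induces_kneser (i : ℕ) (hi : 1 ≤ i) :
    ∃ e : {A : Finset (Fin (2*i+1)) // A.card = i} ≃ {A : Finset (Fin (2*i+1)) // A.card = i},
      ∀ A B : {A : Finset (Fin (2*i+1)) // A.card = i},
        ((A.1 ∆ B.1).card = 1 ∨ (A.1 ∆ B.1ᶜ).card = 1) ↔
          Disjoint ((e A).1 : Finset (Fin (2*i+1))) ((e B).1 : Finset (Fin (2*i+1))) := by
  refine ⟨Equiv.refl _, ?_⟩
  rintro ⟨A, hA⟩ ⟨B, hB⟩
  simp only [Equiv.refl_apply]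
  set m := (A ∩ B).card with hm
  have hAB : m + (A \ B).card = A.card := Finset.card_inter_add_card_sdiff A B
  have hBA : m + (B \ A).card = B.card := by
    rw [hm, Finset.inter_comm]; exact Finset.card_inter_add_card_sdiff B A
  have hcompl : Bᶜ.card = i + 1 := by
    rw [Finset.card_compl, hB, Fintype.card_fin]; omega
  have h1 : A \ Bᶜ = A ∩ B := by ext x; simp
  have h2 : Bᶜ \ A = Bᶜ \ (A \ B) := by
    ext x; simp only [Finset.mem_sdiff, Finset.mem_compl]; tauto
  have hsub : A \ B ⊆ Bᶜ := fun x hx => by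
    simp only [Finset.mem_sdiff] at hx; simpa [Finset.mem_compl] using hx.2
  have h3 : (Bᶜ \ (A \ B)).card = Bᶜ.card - (A \ B).card :=
    Finset.card_sdiff_of_subset hsub
  have hc1 : (A ∆ B).card = (A \ B).card + (B \ A).card := card_symmDiff' A B
  have hc2 : (A ∆ Bᶜ).card = m + (Bᶜ.card - (A \ B).card) := by
    rw [card_symmDiff', h1, h2, h3, hm]
  have hdisj : Disjoint A B ↔ m = 0 := by
    rw [hm, Finset.card_eq_zero, ← Finset.disjoint_iff_inter_eq_empty]
  rw [hdisj, hc1, hc2]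
  omega
end

section
/- For every k ≥ 2, the extended double cover EDC(SPC(k−1)) of the signed projective cube SPC(k−1) is isomorphic, as a signed graph, to the signed Cayley graph (Z_2^k, {e_1, …, e_{k−1}, J}, {e_k}); consequently EDC(SPC(k−1)) is switching-isomorphic to SPC(k). -/
universe u v

namespace EdcSpcAux

variable {k : ℕ}

/-- The gluing map. -/
def F (k : ℕ) (d : Fin (k-1) → ZMod 2) (η : ZMod 2) : Fin k → ZMod 2 :=
  fun j => if h : (j : ℕ) < k - 1 then d ⟨j, h⟩ else η

lemma zmod2_sub_eq_zero (a b : ZMod 2) : a - b = 0 ↔ a = b := sub_eq_zero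

lemma zmod2_sub_eq_one (a b : ZMod 2) : a - b = 1 ↔ a ≠ b := by revert a b; decide

lemma zmod2_iff_one (a b : ZMod 2) : ((a = 1) ↔ (b = 1)) ↔ a = b := by revert a b; decide

lemma zmod2_not_eq_zero (a : ZMod 2) : (¬ a = 0) ↔ a = 1 := by revert a; decide

/-- The vertex bijection. -/
def e (k : ℕ) (hk : 2 ≤ k) : ((Fin (k-1) → ZMod 2) × ZMod 2) ≃ (Fin k → ZMod 2) where
  toFun p := F k p.1 p.2
  invFun z := (fun i => z (Fin.castLE (Nat.sub_le k 1) i), z ⟨k-1, Nat.sub_lt (by omega) one_pos⟩)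
  left_inv p := by
    refine Prod.ext ?_ ?_
    · funext i
      have hi : ((Fin.castLE (Nat.sub_le k 1) i : Fin k) : ℕ) < k - 1 := i.isLt
      simp only [F]
      rw [dif_pos hi]
      exact congrArg p.1 (Fin.ext (by simp))
    · simp only [F]
      rw [dif_neg (by omega)]
  right_inv z := by
    funext j
    simp only [F]
    split
    · rfl
    · congr 1
      have := j.isLt
      exact Fin.ext (by simp; omega)

lemma e_sub (hk : 2 ≤ k) (p q : (Fin (k-1) → ZMod 2) × ZMod 2) :
    e k hk p - e k hk q = F k (p.1 - q.1) (p.2 - q.2) := by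
  funext j
  simp only [Pi.sub_apply, e, Equiv.coe_fn_mk, F]
  split <;> simp

lemma F_eq_single (d : Fin (k-1) → ZMod 2) (η : ZMod 2) (i : Fin (k-1)) :
    F k d η = Pi.single (Fin.castLE (Nat.sub_le k 1) i) 1 ↔ d = Pi.single i 1 ∧ η = 0 := by
  constructor
  · intro h
    have hk1 : k - 1 < k := by have := (Fin.castLE (Nat.sub_le k 1) i).isLt; omega
    constructor
    · funext i'
      have h1 := congrFun h (Fin.castLE (Nat.sub_le k 1) i')
      have hi' : ((Fin.castLE (Nat.sub_le k 1) i' : Fin k) : ℕ) < k - 1 := i'.isLt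
      rw [F, dif_pos hi'] at h1
      rw [Pi.single_apply] at h1
      rw [Pi.single_apply]
      by_cases hii : i' = i
      · subst hii
        rw [if_pos rfl]
        rw [if_pos rfl] at h1
        exact h1
      · rw [if_neg hii]
        rw [if_neg (fun hh => hii (Fin.castLE_injective _ hh))] at h1
        exact h1
    · have h2 := congrFun h ⟨k - 1, hk1⟩
      rw [F, dif_neg (by simp)] at h2
      rw [h2, Pi.single_apply, if_neg]
      intro hh
      have := congrArg Fin.val hh
      simp at this
      have := i.isLt
      omega
  · rintro ⟨rfl, rfl⟩
    funext j
    simp only [F]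
    split
    · next h =>
      rw [Pi.single_apply, Pi.single_apply]
      by_cases hji : (⟨(j : ℕ), h⟩ : Fin (k-1)) = i
      · have hv : (j : ℕ) = (i : ℕ) := congrArg Fin.val hji
        rw [if_pos hji, if_pos (Fin.ext (by simpa using hv))]
      · have hv : (j : ℕ) ≠ (i : ℕ) := fun hh => hji (Fin.ext hh)
        rw [if_neg hji, if_neg (fun hh => hv (by simpa using congrArg Fin.val hh))]
    · next h =>
      rw [Pi.single_apply, if_neg]
      intro hh
      have := congrArg Fin.val hh
      simp at this
      have := i.isLt
      omega

lemma F_eq_J (hk : 2 ≤ k) (d : Fin (k-1) → ZMod 2) (η : ZMod 2) :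
    F k d η = (fun _ => 1) ↔ d = (fun _ => 1) ∧ η = 1 := by
  constructor
  · intro h
    constructor
    · funext i'
      have h1 := congrFun h (Fin.castLE (Nat.sub_le k 1) i')
      have hi' : ((Fin.castLE (Nat.sub_le k 1) i' : Fin k) : ℕ) < k - 1 := i'.isLt
      rwa [F, dif_pos hi'] at h1
    · have h2 := congrFun h ⟨k - 1, by omega⟩
      rwa [F, dif_neg (by simp)] at h2
  · rintro ⟨rfl, rfl⟩
    funext j
    simp only [F]
    split <;> rfl

lemma F_eq_last (hk : 2 ≤ k) (d : Fin (k-1) → ZMod 2) (η : ZMod 2) :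
    F k d η = Pi.single (⟨k-1, Nat.sub_lt (by omega) one_pos⟩ : Fin k) 1 ↔ d = 0 ∧ η = 1 := by
  constructor
  · intro h
    constructor
    · funext i'
      have h1 := congrFun h (Fin.castLE (Nat.sub_le k 1) i')
      have hi' : ((Fin.castLE (Nat.sub_le k 1) i' : Fin k) : ℕ) < k - 1 := i'.isLt
      rw [F, dif_pos hi'] at h1
      rw [Pi.single_apply, if_neg (fun hh => by
        have hv := congrArg Fin.val hh
        simp only [Fin.coe_castLE] at hv
        have := i'.isLt
        omega)] at h1
      show d i' = 0
      exact h1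
    · have h2 := congrFun h ⟨k - 1, by omega⟩
      rw [F, dif_neg (by simp)] at h2
      rwa [Pi.single_apply, if_pos rfl] at h2
  · rintro ⟨rfl, rfl⟩
    funext j
    simp only [F]
    split
    · next h =>
      rw [Pi.single_apply, if_neg, Pi.zero_apply]
      intro hh
      have := congrArg Fin.val hh
      simp at this
      omega
    · next h =>
      have := j.isLt
      rw [Pi.single_apply, if_pos (Fin.ext (by simp; omega))]

lemma single_last_apply (hk : 2 ≤ k) (i : Fin k) :
    (Pi.single i 1 : Fin k → ZMod 2) ⟨k-1, Nat.sub_lt (by omega) one_pos⟩ = if (i : ℕ) = k - 1 then 1 else 0 := by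
  rw [Pi.single_apply]
  congr 1
  simp [Fin.ext_iff, eq_comm]

end EdcSpcAux

/-- `EDC(SPC(k-1))` is isomorphic to the signed Cayley graph
`(ℤ₂ᵏ, {e₁,…,e_(k-1), J}, {e_k})`, hence switching-isomorphic to `SPC(k)`. -/
theorem edc_spc (k : ℕ) (hk : 2 ≤ k) :
    SignedGraph.Iso (SignedGraph.EDC (SPC (k-1)))
      (SCayley2 _ (pi2 k)
        ({z | ∃ i : Fin (k-1), z = Pi.single (Fin.castLE (Nat.sub_le k 1) i) 1} ∪
          {z | z = fun _ => 1})
        {z | z = Pi.single (⟨k-1, by omega⟩ : Fin k) 1}) ∧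
    SignedGraph.SwitchIso (SignedGraph.EDC (SPC (k-1))) (SPC k) := by
  classical
  have key : SignedGraph.Iso (SignedGraph.EDC (SPC (k-1)))
      (SCayley2 _ (pi2 k)
        ({z | ∃ i : Fin (k-1), z = Pi.single (Fin.castLE (Nat.sub_le k 1) i) 1} ∪
          {z | z = fun _ => 1})
        {z | z = Pi.single (⟨k-1, by omega⟩ : Fin k) 1}) := by
    refine ⟨EdcSpcAux.e k hk, fun p q => ?_, fun p q => ?_⟩
    · simp only [SignedGraph.EDC, SPC, SCayley2, Set.mem_setOf_eq, Set.mem_union,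
        Set.mem_singleton_iff]
      rw [EdcSpcAux.e_sub hk]
      simp only [EdcSpcAux.F_eq_single, EdcSpcAux.F_eq_J hk, EdcSpcAux.zmod2_sub_eq_zero,
        EdcSpcAux.zmod2_sub_eq_one]
      constructor
      · rintro (⟨⟨i, hi⟩, h2⟩ | ⟨h1, h2⟩)
        · exact Or.inl ⟨i, hi, h2⟩
        · exact Or.inr ⟨h1, h2⟩
      · rintro (⟨i, hi, h2⟩ | ⟨h1, h2⟩)
        · exact Or.inl ⟨⟨i, hi⟩, h2⟩
        · exact Or.inr ⟨h1, h2⟩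
    · simp only [SignedGraph.EDC, SPC, SCayley2, Set.mem_setOf_eq]
      rw [EdcSpcAux.e_sub hk]
      rw [EdcSpcAux.F_eq_last hk, sub_eq_zero, EdcSpcAux.zmod2_sub_eq_one]
  refine ⟨key, ?_⟩
  refine ⟨{z : Fin k → ZMod 2 | z ⟨k-1, by omega⟩ = 1}, ?_⟩
  obtain ⟨f, hp, hn⟩ := key
  refine ⟨f, fun p q => ?_, fun p q => ?_⟩
  · rw [hp p q]
    set x := f p
    set y := f q
    simp only [SignedGraph.switch, SPC, SCayley2, Set.mem_setOf_eq, Set.mem_union,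
      Set.mem_singleton_iff, EdcSpcAux.zmod2_iff_one]
    have hsub : (x ⟨k-1, by omega⟩ = y ⟨k-1, by omega⟩) ↔ (x - y) ⟨k-1, by omega⟩ = 0 := by
      rw [Pi.sub_apply, sub_eq_zero]
    rw [hsub]
    simp only [EdcSpcAux.zmod2_not_eq_zero]
    generalize x - y = d
    constructor
    · rintro (⟨i, rfl⟩ | rfl)
      · refine Or.inl ⟨⟨Fin.castLE (Nat.sub_le k 1) i, rfl⟩, ?_⟩
        rw [EdcSpcAux.single_last_apply hk, if_neg]
        have := i.isLt
        simp only [Fin.coe_castLE]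
        omega
      · exact Or.inr ⟨rfl, rfl⟩
    · rintro (⟨⟨i, rfl⟩, hlast⟩ | ⟨rfl, _⟩)
      · rw [EdcSpcAux.single_last_apply hk] at hlast
        have hne : (i : ℕ) ≠ k - 1 := by
          intro h; rw [if_pos h] at hlast; exact one_ne_zero hlast
        have hlt : (i : ℕ) < k - 1 := by have := i.isLt; omega
        refine Or.inl ⟨⟨i, hlt⟩, ?_⟩
        have hi : (Fin.castLE (Nat.sub_le k 1) (⟨(i : ℕ), hlt⟩ : Fin (k-1))) = i := Fin.ext rfl
        rw [hi]
      · exact Or.inr rfl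
  · rw [hn p q]
    set x := f p
    set y := f q
    simp only [SignedGraph.switch, SPC, SCayley2, Set.mem_setOf_eq, Set.mem_union,
      Set.mem_singleton_iff, EdcSpcAux.zmod2_iff_one]
    have hsub : (x ⟨k-1, by omega⟩ = y ⟨k-1, by omega⟩) ↔ (x - y) ⟨k-1, by omega⟩ = 0 := by
      rw [Pi.sub_apply, sub_eq_zero]
    rw [hsub]
    simp only [EdcSpcAux.zmod2_not_eq_zero]
    generalize x - y = d
    constructor
    · rintro rfl
      refine Or.inr ⟨⟨⟨k-1, by omega⟩, rfl⟩, ?_⟩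
      rw [EdcSpcAux.single_last_apply hk, if_pos rfl]
    · rintro (⟨rfl, hlast⟩ | ⟨⟨i, rfl⟩, hlast⟩)
      · exact absurd hlast one_ne_zero
      · rw [EdcSpcAux.single_last_apply hk] at hlast
        have : (i : ℕ) = k - 1 := by
          by_contra h; rw [if_neg h] at hlast; exact zero_ne_one hlast
        have hi : i = (⟨k-1, by omega⟩ : Fin k) := Fin.ext this
        rw [hi]
end

section
/- For every signed graph (G,σ): g_01(EDC(G,σ)) = g_01(G,σ); g_10(EDC(G,σ)) = g_11(G,σ) + 1; and g_11(EDC(G,σ)) = g_10(G,σ) + 1 (with the convention ∞ + 1 = ∞). -/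
universe u v

namespace SignedGraph
namespace Walk

variable {V : Type u} {G : SignedGraph V}

def copy : ∀ {u v u' v' : V}, G.Walk u v → u = u' → v = v' → G.Walk u' v'
  | _, _, _, _, p, rfl, rfl => p

@[simp] lemma length_copy {u v u' v' : V} (p : G.Walk u v) (hu : u = u') (hv : v = v') :
    (p.copy hu hv).length = p.length := by subst hu; subst hv; rfl

@[simp] lemma negCount_copy {u v u' v' : V} (p : G.Walk u v) (hu : u = u') (hv : v = v') :
    (p.copy hu hv).negCount = p.negCount := by subst hu; subst hv; rfl

@[simp] lemma length_append : ∀ {u v w : V} (p : G.Walk u v) (q : G.Walk v w),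
    (p.append q).length = p.length + q.length
  | _, _, _, .nil _, q => by simp [append, length]
  | _, _, _, .consPos h p, q => by simp [append, length, length_append p q]; omega
  | _, _, _, .consNeg h p, q => by simp [append, length, length_append p q]; omega

@[simp] lemma negCount_append : ∀ {u v w : V} (p : G.Walk u v) (q : G.Walk v w),
    (p.append q).negCount = p.negCount + q.negCount
  | _, _, _, .nil _, q => by simp [append, negCount]
  | _, _, _, .consPos h p, q => by simp [append, negCount, negCount_append p q]
  | _, _, _, .consNeg h p, q => by simp [append, negCount, negCount_append p q]; omega

lemma negCount_le_length : ∀ {u v : V} (p : G.Walk u v), p.negCount ≤ p.length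
  | _, _, .nil _ => le_refl _
  | _, _, .consPos h p => by simp [length, negCount]; exact le_trans (negCount_le_length p) (by omega)
  | _, _, .consNeg h p => by simp [length, negCount]; exact negCount_le_length p

end Walk

variable {V : Type u} {G : SignedGraph V}

lemma zmod2_ne (i : ZMod 2) : i ≠ i + 1 := by revert i; decide

lemma zmod2_succ (i j : ZMod 2) (h : i ≠ j) : j = i + 1 := by revert h; revert i j; decide

def lift : ∀ {u v : V} (p : G.Walk u v) (i : ZMod 2),
    (G.EDC).Walk (u, i) (v, i + (p.negCount : ZMod 2))
  | _, _, .nil v, i => (Walk.nil (v, i)).copy rfl (by simp [Walk.negCount])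
  | _, _, @Walk.consPos _ _ u v w h p, i =>
      Walk.consPos (show (G.EDC).pos (u, i) (v, i) from Or.inl ⟨h, rfl⟩)
        ((lift p i).copy rfl (by simp [Walk.negCount]))
  | _, _, @Walk.consNeg _ _ u v w h p, i =>
      Walk.consPos (show (G.EDC).pos (u, i) (v, i + 1) from Or.inr ⟨h, zmod2_ne i⟩)
        ((lift p (i + 1)).copy rfl (by
          simp only [Walk.negCount]; push_cast; ring_nf))

@[simp] lemma length_lift : ∀ {u v : V} (p : G.Walk u v) (i : ZMod 2),
    (lift p i).length = p.length
  | _, _, .nil v, i => by simp [lift, Walk.length]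
  | _, _, .consPos h p, i => by rw [lift, Walk.length]; exact congrArg (· + 1) ((Walk.length_copy _ _ _).trans (length_lift p i))
  | _, _, .consNeg h p, i => by simp [lift, Walk.length, length_lift p (i+1)]

@[simp] lemma negCount_lift : ∀ {u v : V} (p : G.Walk u v) (i : ZMod 2),
    (lift p i).negCount = 0
  | _, _, .nil v, i => by rw [lift, Walk.negCount_copy]; rfl
  | _, _, .consPos h p, i => by simp [lift, Walk.negCount, negCount_lift p i]
  | _, _, .consNeg h p, i => by rw [lift, Walk.negCount, Walk.negCount_copy, negCount_lift p (i+1)]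

lemma proj {a b : V × ZMod 2} (p : (G.EDC).Walk a b) :
    ∃ q : G.Walk a.1 b.1, p.length = q.length + p.negCount ∧
      a.2 + (q.negCount : ZMod 2) + (p.negCount : ZMod 2) = b.2 := by
  induction p with
  | nil v => exact ⟨.nil v.1, by simp [Walk.length, Walk.negCount]⟩
  | consPos h p ih =>
      obtain ⟨q, hl, hp⟩ := ih
      rcases h with ⟨h, he⟩ | ⟨h, he⟩
      · refine ⟨.consPos h q, ?_, ?_⟩
        · simp [Walk.length, Walk.negCount]; omega
        · simp only [Walk.negCount]
          rw [he]; exact hp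
      · refine ⟨.consNeg h q, ?_, ?_⟩
        · simp [Walk.length, Walk.negCount]; omega
        · simp only [Walk.negCount]
          rw [zmod2_succ _ _ he] at hp
          push_cast
          push_cast at hp
          linear_combination hp
  | consNeg h p ih =>
      obtain ⟨q, hl, hp⟩ := ih
      obtain ⟨h1, h2⟩ := h
      refine ⟨q.copy h1.symm rfl, ?_, ?_⟩
      · simp [Walk.length, Walk.negCount]; omega
      · simp only [Walk.negCount, Walk.negCount_copy]
        rw [zmod2_succ _ _ h2] at hp
        push_cast
        push_cast at hp
        linear_combination hp

end SignedGraph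

namespace SignedGraph
variable {V : Type u} {G : SignedGraph V}

lemma exists_edc_even {v : V} (p : G.Walk v v) (h : (p.negCount : ZMod 2) = 0) :
    ∃ q : (G.EDC).Walk (v, (0 : ZMod 2)) (v, (0 : ZMod 2)),
      q.length = p.length ∧ q.negCount = 0 :=
  ⟨(lift p 0).copy rfl (by rw [h]; norm_num), by simp, by simp⟩

lemma exists_edc_odd {v : V} (p : G.Walk v v) (h : (p.negCount : ZMod 2) = 1) :
    ∃ q : (G.EDC).Walk (v, (0 : ZMod 2)) (v, (0 : ZMod 2)),
      q.length = p.length + 1 ∧ q.negCount = 1 :=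
  ⟨((lift p 0).copy rfl (by rw [h]; norm_num)).append
      (.consNeg (show (G.EDC).neg (v, 1) (v, 0) from ⟨rfl, one_ne_zero⟩) (.nil (v, 0))),
    by simp [Walk.length], by simp [Walk.negCount]⟩

end SignedGraph


/-- the effect of the extended double cover on the parameters `g_{ij}`. -/
theorem gir_edc {V : Type u} (G : SignedGraph V) :
    SignedGraph.gir (SignedGraph.EDC G) 0 1 = SignedGraph.gir G 0 1 ∧
    SignedGraph.gir (SignedGraph.EDC G) 1 0 = SignedGraph.gir G 1 1 + 1 ∧
    SignedGraph.gir (SignedGraph.EDC G) 1 1 = SignedGraph.gir G 1 0 + 1 := by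
  have key1 : ∀ x y z : ZMod 2, x = y + z → z = 0 → x = 1 → y = 1 := by decide
  have key1' : ∀ i y z : ZMod 2, i + y + z = i → z = 0 → y = 0 := by decide
  have key2 : ∀ i y z : ZMod 2, i + y + z = i → z = 1 → y = 1 := by decide
  have key3 : ∀ x y z : ZMod 2, x = y + z → z = 1 → x = 0 → y = 1 := by decide
  have key4 : ∀ x y z : ZMod 2, x = y + z → z = 1 → x = 1 → y = 0 := by decide
  have pos_of_one : ∀ m : ℕ, (m : ZMod 2) = 1 → 0 < m := by
    intro m hm
    rcases Nat.eq_zero_or_pos m with h | h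
    · rw [h] at hm; exact absurd hm (by decide)
    · exact h
  refine ⟨?_, ?_, ?_⟩
  · -- g01(EDC) = g01(G)
    apply le_antisymm
    · apply sInf_le_sInf
      rintro n ⟨v, p, hpos, hneg, hlen, rfl⟩
      obtain ⟨q, hq1, hq2⟩ := SignedGraph.exists_edc_even p hneg
      exact ⟨(v, 0), q, by omega, by rw [hq2]; norm_num, by rw [hq1]; exact hlen, by rw [hq1]⟩
    · apply le_sInf
      rintro n ⟨a, p, hpos, hneg, hlen, rfl⟩
      obtain ⟨q, hl, hp⟩ := SignedGraph.proj p
      have hc : (p.length : ZMod 2) = (q.length : ZMod 2) + (p.negCount : ZMod 2) := by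
        exact_mod_cast congrArg (Nat.cast : ℕ → ZMod 2) hl
      have hq : (q.negCount : ZMod 2) = 0 := key1' _ _ _ hp hneg
      have hql : (q.length : ZMod 2) = 1 := key1 _ _ _ hc hneg hlen
      exact le_trans (sInf_le ⟨a.1, q, pos_of_one _ hql, hq, hql, rfl⟩)
        (Nat.cast_le.2 (by omega))
  · -- g10(EDC) = g11(G) + 1
    apply le_antisymm
    · rcases eq_or_ne (SignedGraph.gir G 1 1) ⊤ with h | h
      · rw [h, top_add]; exact le_top
      · have hlt : SignedGraph.gir G 1 1 < SignedGraph.gir G 1 1 + 1 :=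
          (ENat.lt_add_one_iff h).2 le_rfl
        obtain ⟨m, hm, hmlt⟩ := sInf_lt_iff.mp hlt
        obtain ⟨v, p, hpos, hneg, hlen, rfl⟩ := hm
        obtain ⟨q, hq1, hq2⟩ := SignedGraph.exists_edc_odd p hneg
        have hmem : SignedGraph.gir (SignedGraph.EDC G) 1 0 ≤ ((p.length + 1 : ℕ) : ℕ∞) := by
          apply sInf_le
          exact ⟨(v, 0), q, by omega, by rw [hq2]; norm_num, by
            rw [hq1]; push_cast; rw [hlen]; decide, by rw [hq1]⟩
        refine le_trans hmem ?_
        have : ((p.length : ℕ∞)) + 1 ≤ SignedGraph.gir G 1 1 + 1 :=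
          add_le_add_left ((ENat.lt_add_one_iff h).1 hmlt) 1
        calc ((p.length + 1 : ℕ) : ℕ∞) = (p.length : ℕ∞) + 1 := by push_cast; rfl
          _ ≤ _ := this
    · apply le_sInf
      rintro n ⟨a, p, hpos, hneg, hlen, rfl⟩
      obtain ⟨q, hl, hp⟩ := SignedGraph.proj p
      have hc : (p.length : ZMod 2) = (q.length : ZMod 2) + (p.negCount : ZMod 2) := by
        exact_mod_cast congrArg (Nat.cast : ℕ → ZMod 2) hl
      have hq : (q.negCount : ZMod 2) = 1 := key2 _ _ _ hp hneg
      have hql : (q.length : ZMod 2) = 1 := key3 _ _ _ hc hneg hlen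
      have hN : 0 < p.negCount := pos_of_one _ hneg
      have h1 : SignedGraph.gir G 1 1 ≤ (q.length : ℕ∞) :=
        sInf_le ⟨a.1, q, pos_of_one _ hql, hq, hql, rfl⟩
      calc SignedGraph.gir G 1 1 + 1 ≤ (q.length : ℕ∞) + 1 := add_le_add_left h1 1
        _ = ((q.length + 1 : ℕ) : ℕ∞) := by push_cast; rfl
        _ ≤ (p.length : ℕ∞) := Nat.cast_le.2 (by omega)
  · -- g11(EDC) = g10(G) + 1
    apply le_antisymm
    · rcases eq_or_ne (SignedGraph.gir G 1 0) ⊤ with h | h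
      · rw [h, top_add]; exact le_top
      · have hlt : SignedGraph.gir G 1 0 < SignedGraph.gir G 1 0 + 1 :=
          (ENat.lt_add_one_iff h).2 le_rfl
        obtain ⟨m, hm, hmlt⟩ := sInf_lt_iff.mp hlt
        obtain ⟨v, p, hpos, hneg, hlen, rfl⟩ := hm
        obtain ⟨q, hq1, hq2⟩ := SignedGraph.exists_edc_odd p hneg
        have hmem : SignedGraph.gir (SignedGraph.EDC G) 1 1 ≤ ((p.length + 1 : ℕ) : ℕ∞) := by
          apply sInf_le
          exact ⟨(v, 0), q, by omega, by rw [hq2]; norm_num, by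
            rw [hq1]; push_cast; rw [hlen]; decide, by rw [hq1]⟩
        refine le_trans hmem ?_
        have : ((p.length : ℕ∞)) + 1 ≤ SignedGraph.gir G 1 0 + 1 :=
          add_le_add_left ((ENat.lt_add_one_iff h).1 hmlt) 1
        calc ((p.length + 1 : ℕ) : ℕ∞) = (p.length : ℕ∞) + 1 := by push_cast; rfl
          _ ≤ _ := this
    · apply le_sInf
      rintro n ⟨a, p, hpos, hneg, hlen, rfl⟩
      obtain ⟨q, hl, hp⟩ := SignedGraph.proj p
      have hc : (p.length : ZMod 2) = (q.length : ZMod 2) + (p.negCount : ZMod 2) := by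
        exact_mod_cast congrArg (Nat.cast : ℕ → ZMod 2) hl
      have hq : (q.negCount : ZMod 2) = 1 := key2 _ _ _ hp hneg
      have hql : (q.length : ZMod 2) = 0 := key4 _ _ _ hc hneg hlen
      have hN : 0 < p.negCount := pos_of_one _ hneg
      have hq0 : 0 < q.length :=
        lt_of_lt_of_le (pos_of_one _ hq) (SignedGraph.Walk.negCount_le_length q)
      have h1 : SignedGraph.gir G 1 0 ≤ (q.length : ℕ∞) :=
        sInf_le ⟨a.1, q, hq0, hq, hql, rfl⟩
      calc SignedGraph.gir G 1 0 + 1 ≤ (q.length : ℕ∞) + 1 := add_le_add_left h1 1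
        _ = ((q.length + 1 : ℕ) : ℕ∞) := by push_cast; rfl
        _ ≤ (p.length : ℕ∞) := Nat.cast_le.2 (by omega)
end

section
/- For all k, l ≥ 1, the common product SPC(k) ∘ SPC(l) of signed projective cubes is isomorphic, as a signed graph, to the signed projective cube SPC(k+l). -/
universe u v

section Aux

variable {k l : ℕ}

/-- The vertex equivalence. -/
def spcEquiv (k l : ℕ) :
    ((Fin k → ZMod 2) × (Fin l → ZMod 2)) ≃ (Fin (k + l) → ZMod 2) :=
  (Equiv.sumArrowEquivProdArrow (Fin k) (Fin l) (ZMod 2)).symm.trans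
    (finSumFinEquiv.arrowCongr (Equiv.refl _))

lemma spcEquiv_apply (p : (Fin k → ZMod 2) × (Fin l → ZMod 2)) :
    spcEquiv k l p = Sum.elim p.1 p.2 ∘ finSumFinEquiv.symm := by
  rfl

lemma spcEquiv_sub (p q : (Fin k → ZMod 2) × (Fin l → ZMod 2)) :
    spcEquiv k l p - spcEquiv k l q = spcEquiv k l (p.1 - q.1, p.2 - q.2) := by
  funext i
  simp only [spcEquiv_apply, Function.comp_apply, Pi.sub_apply]
  cases finSumFinEquiv.symm i <;> simp

lemma elim_eq_single (p : Fin k → ZMod 2) (q : Fin l → ZMod 2) (s : Fin k ⊕ Fin l) :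
    Sum.elim p q = Pi.single s 1 ↔
      (match s with
        | Sum.inl a => p = Pi.single a 1 ∧ q = 0
        | Sum.inr b => p = 0 ∧ q = Pi.single b 1) := by
  cases s with
  | inl a =>
    constructor
    · intro h
      constructor
      · funext x
        have := congrFun h (Sum.inl x)
        simpa [Pi.single_apply, Sum.inl.injEq] using this
      · funext y
        have := congrFun h (Sum.inr y)
        simpa [Pi.single_apply] using this
    · rintro ⟨hp, hq⟩
      funext s
      cases s with
      | inl x => simpa [hp, Pi.single_apply, Sum.inl.injEq] using rfl
      | inr y => simp [hq, Pi.single_apply]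
  | inr b =>
    constructor
    · intro h
      constructor
      · funext x
        have := congrFun h (Sum.inl x)
        simpa [Pi.single_apply] using this
      · funext y
        have := congrFun h (Sum.inr y)
        simpa [Pi.single_apply, Sum.inr.injEq] using this
    · rintro ⟨hp, hq⟩
      funext s
      cases s with
      | inl x => simp [hp, Pi.single_apply]
      | inr y => simpa [hq, Pi.single_apply, Sum.inr.injEq] using rfl

lemma spcEquiv_eq_single (p : (Fin k → ZMod 2) × (Fin l → ZMod 2)) :
    (∃ i : Fin (k + l), spcEquiv k l p = Pi.single i 1) ↔
      ((∃ a : Fin k, p.1 = Pi.single a 1) ∧ p.2 = 0) ∨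
        (p.1 = 0 ∧ ∃ b : Fin l, p.2 = Pi.single b 1) := by
  have key : ∀ i : Fin (k + l),
      spcEquiv k l p = Pi.single i 1 ↔
        Sum.elim p.1 p.2 = Pi.single (finSumFinEquiv.symm i) 1 := by
    intro i
    rw [spcEquiv_apply]
    constructor
    · intro h
      funext s
      have := congrFun h (finSumFinEquiv s)
      simp only [Function.comp_apply, Equiv.symm_apply_apply] at this
      rw [this]
      simp [Pi.single_apply, Equiv.eq_symm_apply, eq_comm]
    · intro h
      funext i'
      have := congrFun h (finSumFinEquiv.symm i')
      simp only [Function.comp_apply] at this ⊢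
      rw [this]
      simp [Pi.single_apply, finSumFinEquiv.symm.injective.eq_iff]
  constructor
  · rintro ⟨i, hi⟩
    rw [key i, elim_eq_single] at hi
    rcases hs : finSumFinEquiv.symm i with a | b
    · rw [hs] at hi
      exact Or.inl ⟨⟨a, hi.1⟩, hi.2⟩
    · rw [hs] at hi
      exact Or.inr ⟨hi.1, ⟨b, hi.2⟩⟩
  · rintro (⟨⟨a, ha⟩, hq⟩ | ⟨hp, ⟨b, hb⟩⟩)
    · refine ⟨finSumFinEquiv (Sum.inl a), ?_⟩
      rw [key, Equiv.symm_apply_apply, elim_eq_single]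
      exact ⟨ha, hq⟩
    · refine ⟨finSumFinEquiv (Sum.inr b), ?_⟩
      rw [key, Equiv.symm_apply_apply, elim_eq_single]
      exact ⟨hp, hb⟩

lemma spcEquiv_eq_ones (p : (Fin k → ZMod 2) × (Fin l → ZMod 2)) :
    (spcEquiv k l p = fun _ => 1) ↔ (p.1 = fun _ => 1) ∧ (p.2 = fun _ => 1) := by
  rw [spcEquiv_apply]
  constructor
  · intro h
    constructor
    · funext x
      have := congrFun h (finSumFinEquiv (Sum.inl x))
      simpa using this
    · funext y
      have := congrFun h (finSumFinEquiv (Sum.inr y))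
      simpa using this
  · rintro ⟨h1, h2⟩
    funext i
    cases hs : finSumFinEquiv.symm i with
    | inl a => simp [hs, h1]
    | inr b => simp [hs, h2]

end Aux

/-- `SPC(k) ∘ SPC(l) ≅ SPC(k+l)`. -/
theorem cprod_spc (k l : ℕ) (hk : 1 ≤ k) (hl : 1 ≤ l) :
    SignedGraph.Iso (SignedGraph.cprod (SPC k) (SPC l)) (SPC (k + l)) := by
  refine ⟨spcEquiv k l, ?_, ?_⟩
  · rintro ⟨x, u⟩ ⟨y, v⟩
    show ((x - y ∈ _ ∧ u = v) ∨ (x = y ∧ u - v ∈ _)) ↔ _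
    show _ ↔ spcEquiv k l (x, u) - spcEquiv k l (y, v) ∈ _
    rw [spcEquiv_sub]
    constructor
    · rintro (⟨⟨i, hi⟩, huv⟩ | ⟨hxy, ⟨j, hj⟩⟩)
      · exact (spcEquiv_eq_single _).2 (Or.inl ⟨⟨i, hi⟩, by simp [huv]⟩)
      · exact (spcEquiv_eq_single _).2 (Or.inr ⟨by simp [hxy], ⟨j, hj⟩⟩)
    · intro h
      rcases (spcEquiv_eq_single _).1 h with ⟨⟨a, ha⟩, hq⟩ | ⟨hp, ⟨b, hb⟩⟩
      · exact Or.inl ⟨⟨a, ha⟩, sub_eq_zero.1 hq⟩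
      · exact Or.inr ⟨sub_eq_zero.1 hp, ⟨b, hb⟩⟩
  · rintro ⟨x, u⟩ ⟨y, v⟩
    show (x - y ∈ _ ∧ u - v ∈ _) ↔ _
    show _ ↔ spcEquiv k l (x, u) - spcEquiv k l (y, v) ∈ _
    rw [spcEquiv_sub]
    constructor
    · rintro ⟨h1, h2⟩
      exact (spcEquiv_eq_ones _).2 ⟨h1, h2⟩
    · intro h
      exact (spcEquiv_eq_ones _).1 h
end

section
/- Let Γ be a finite elementary abelian 2-group and let Ĝ = (Γ, S⁺, S⁻) be a signed Cayley graph with S⁺, S⁻ ⊆ Γ ∖ {0} whose underlying graph is bipartite. If the unbalanced girth of Ĝ (the length of a shortest negative cycle) equals 2k, then Ĝ contains an induced signed subgraph that is switching-isomorphic to the signed projective cube SPC(2k−1). -/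
universe u v

section AuxProof

variable {Γ : Type} [AddCommGroup Γ]

lemma neg_eq_self_of_two (h2 : ∀ x : Γ, x + x = 0) (x : Γ) : -x = x :=
  neg_eq_of_add_eq_zero_left (h2 x)

lemma sub_eq_add_of_two (h2 : ∀ x : Γ, x + x = 0) (x y : Γ) : x - y = x + y := by
  rw [sub_eq_add_neg, neg_eq_self_of_two h2]

lemma negCount_le_length {V : Type u} {G : SignedGraph V} :
    ∀ {u v : V} (p : G.Walk u v), p.negCount ≤ p.length := by
  intro u v p
  induction p with
  | nil v => exact le_refl 0
  | consPos h p ih =>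
      simp only [SignedGraph.Walk.length, SignedGraph.Walk.negCount]
      omega
  | consNeg h p ih =>
      simp only [SignedGraph.Walk.length, SignedGraph.Walk.negCount]
      omega

/-- From a family of valid steps indexed by a finset, build a walk. -/
lemma exists_walk_of_family (h2 : ∀ x : Γ, x + x = 0) (Sp Sn : Set Γ)
    {n : ℕ} (D : Fin n → Γ) (SG : Fin n → Bool)
    (hval : ∀ i, if SG i then D i ∈ Sn else D i ∈ Sp) (A : Finset (Fin n)) :
    ∀ (v w : Γ), v - w = ∑ i ∈ A, D i →
      ∃ p : (SCayley2 Γ h2 Sp Sn).Walk v w,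
        p.length = A.card ∧ p.negCount = ∑ i ∈ A, (if SG i then 1 else 0) := by
  classical
  induction A using Finset.induction_on with
  | empty =>
      intro v w h
      simp only [Finset.sum_empty] at h
      obtain rfl : v = w := sub_eq_zero.mp h
      exact ⟨SignedGraph.Walk.nil v, by simp [SignedGraph.Walk.length],
        by simp [SignedGraph.Walk.negCount]⟩
  | @insert i A hiA ih =>
      intro v w h
      rw [Finset.sum_insert hiA] at h
      have h' : (v - D i) - w = ∑ j ∈ A, D j := by
        rw [sub_right_comm, h, add_sub_cancel_left]
      obtain ⟨p, hl, hn⟩ := ih (v - D i) w h'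
      have hedge : v - (v - D i) = D i := by abel
      have hvi := hval i
      cases hsg : SG i with
      | false =>
          rw [hsg] at hvi; simp only [if_neg Bool.false_ne_true] at hvi
          refine ⟨SignedGraph.Walk.consPos (show v - (v - D i) ∈ Sp by rw [hedge]; exact hvi) p,
            ?_, ?_⟩
          · simp [SignedGraph.Walk.length, hl, Finset.card_insert_of_notMem hiA]
          · simp [SignedGraph.Walk.negCount, hn, Finset.sum_insert hiA, hsg]
      | true =>
          rw [hsg] at hvi; simp only [if_pos rfl] at hvi
          refine ⟨SignedGraph.Walk.consNeg (show v - (v - D i) ∈ Sn by rw [hedge]; exact hvi) p,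
            ?_, ?_⟩
          · simp [SignedGraph.Walk.length, hl, Finset.card_insert_of_notMem hiA]
          · simp only [SignedGraph.Walk.negCount, hn, Finset.sum_insert hiA, hsg, if_pos]
            omega

/-- From a walk, extract the family of its steps. -/
lemma family_of_walk (h2 : ∀ x : Γ, x + x = 0) (Sp Sn : Set Γ) :
    ∀ {u w : Γ} (p : (SCayley2 Γ h2 Sp Sn).Walk u w),
      ∃ (n : ℕ) (D : Fin n → Γ) (SG : Fin n → Bool),
        n = p.length ∧
        (∀ i, if SG i then D i ∈ Sn else D i ∈ Sp) ∧
        (∑ i, D i) = u - w ∧ (∑ i, (if SG i then 1 else 0)) = p.negCount := by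
  intro u w p
  induction p with
  | nil v =>
      exact ⟨0, Fin.elim0, Fin.elim0, rfl, fun i => i.elim0, by simp,
        by simp [SignedGraph.Walk.negCount]⟩
  | @consPos u v w h p ih =>
      obtain ⟨n, D, SG, h0, h1, h2s, h3⟩ := ih
      refine ⟨n + 1, Fin.cons (u - v) D, Fin.cons false SG, ?_, ?_, ?_, ?_⟩
      · simp [SignedGraph.Walk.length, h0]
      · intro i
        refine Fin.cases ?_ ?_ i
        · simpa using (show u - v ∈ Sp from h)
        · intro j; simpa using h1 j
      · rw [Fin.sum_univ_succ]
        simp only [Fin.cons_zero, Fin.cons_succ]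
        rw [h2s, sub_add_sub_cancel]
      · rw [Fin.sum_univ_succ]
        simp only [Fin.cons_zero, Fin.cons_succ, Bool.false_eq_true, if_false, zero_add]
        rw [h3]
        rfl
  | @consNeg u v w h p ih =>
      obtain ⟨n, D, SG, h0, h1, h2s, h3⟩ := ih
      refine ⟨n + 1, Fin.cons (u - v) D, Fin.cons true SG, ?_, ?_, ?_, ?_⟩
      · simp [SignedGraph.Walk.length, h0]
      · intro i
        refine Fin.cases ?_ ?_ i
        · simpa using (show u - v ∈ Sn from h)
        · intro j; simpa using h1 j
      · rw [Fin.sum_univ_succ]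
        simp only [Fin.cons_zero, Fin.cons_succ]
        rw [h2s, sub_add_sub_cancel]
      · rw [Fin.sum_univ_succ]
        simp only [Fin.cons_zero, Fin.cons_succ, if_pos rfl]
        rw [add_comm, h3]
        rfl


/-- Sum of `g` over the support of a `ZMod 2`-vector. -/
def phiF {M : Type*} [AddCommMonoid M] {m : ℕ} (g : Fin m → M) (x : Fin m → ZMod 2) : M :=
  ∑ i, if x i = 1 then g i else 0

lemma zmod2_cases (a : ZMod 2) : a = 0 ∨ a = 1 := by revert a; decide

lemma phiF_add {M : Type*} [AddCommMonoid M] (hM : ∀ x : M, x + x = 0) {m : ℕ}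
    (g : Fin m → M) (x y : Fin m → ZMod 2) :
    phiF g x + phiF g y = phiF g (x + y) := by
  unfold phiF
  rw [← Finset.sum_add_distrib]
  refine Finset.sum_congr rfl fun i _ => ?_
  rcases zmod2_cases (x i) with hx | hx <;> rcases zmod2_cases (y i) with hy | hy <;>
    simp [Pi.add_apply, hx, hy, hM (g i), show (1 + 1 : ZMod 2) = 0 from by decide,
      show (0 : ZMod 2) ≠ 1 from by decide]

lemma phiF_zero {M : Type*} [AddCommMonoid M] {m : ℕ} (g : Fin m → M) :
    phiF g 0 = 0 := by
  unfold phiF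
  simp [show (0 : ZMod 2) ≠ 1 from by decide]

lemma phiF_single {M : Type*} [AddCommMonoid M] {m : ℕ} (g : Fin m → M) (i : Fin m) :
    phiF g (Pi.single i 1) = g i := by
  unfold phiF
  rw [Finset.sum_eq_single i]
  · simp
  · intro j _ hj
    simp [Pi.single_apply, hj]
  · simp

lemma phiF_J {M : Type*} [AddCommMonoid M] {m : ℕ} (g : Fin m → M) :
    phiF g (fun _ => 1) = ∑ i, g i := by
  unfold phiF
  simp

lemma phiF_filter {M : Type*} [AddCommMonoid M] {m : ℕ} (g : Fin m → M)
    (x : Fin m → ZMod 2) :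
    phiF g x = ∑ i ∈ Finset.univ.filter (fun i => x i = 1), g i := by
  unfold phiF
  rw [Finset.sum_filter]

end AuxProof

/-- a signed bipartite Cayley graph on a finite elementary abelian 2-group with
unbalanced girth `2k` contains an induced subgraph switching-isomorphic to `SPC(2k-1)`. -/
theorem bipartite_cayley_contains_spc (Γ : Type) [AddCommGroup Γ] [Finite Γ]
    (h2 : ∀ x : Γ, x + x = 0) (Sp Sn : Set Γ)
    (h0p : (0 : Γ) ∉ Sp) (h0n : (0 : Γ) ∉ Sn)
    (hbip : SignedGraph.Bipartite (SCayley2 Γ h2 Sp Sn)) (k : ℕ)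
    (hgirth : SignedGraph.negGirth (SCayley2 Γ h2 Sp Sn) = ((2*k : ℕ) : ℕ∞)) :
    ∃ X : Set Γ,
      SignedGraph.SwitchIso ((SCayley2 Γ h2 Sp Sn).induce X) (SPC (2*k - 1)) := by
  classical
  unfold SignedGraph.negGirth at hgirth
  -- minimality of 2k
  have hmin : ∀ (v : Γ) (p : (SCayley2 Γ h2 Sp Sn).Walk v v), Odd p.negCount →
      2 * k ≤ p.length := by
    intro v p hp
    have h1 : sInf {n : ℕ∞ | ∃ (v : Γ) (p : (SCayley2 Γ h2 Sp Sn).Walk v v),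
        Odd p.negCount ∧ (p.length : ℕ∞) = n} ≤ (p.length : ℕ∞) :=
      sInf_le ⟨v, p, hp, rfl⟩
    rw [hgirth] at h1
    exact_mod_cast h1
  -- existence of a negative closed walk of length 2k
  have hmem : ∃ (v : Γ) (p : (SCayley2 Γ h2 Sp Sn).Walk v v),
      Odd p.negCount ∧ (p.length : ℕ∞) = ((2*k : ℕ) : ℕ∞) := by
    by_contra hc
    push_neg at hc
    have hle : ((2*k : ℕ) : ℕ∞) + 1 ≤
        sInf {n : ℕ∞ | ∃ (v : Γ) (p : (SCayley2 Γ h2 Sp Sn).Walk v v),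
          Odd p.negCount ∧ (p.length : ℕ∞) = n} := by
      apply le_sInf
      rintro n ⟨v, p, hp, rfl⟩
      have h1 : sInf {n : ℕ∞ | ∃ (v : Γ) (p : (SCayley2 Γ h2 Sp Sn).Walk v v),
          Odd p.negCount ∧ (p.length : ℕ∞) = n} ≤ (p.length : ℕ∞) :=
        sInf_le ⟨v, p, hp, rfl⟩
      rw [hgirth] at h1
      have h2' : ((2*k : ℕ) : ℕ∞) ≠ (p.length : ℕ∞) := fun he => hc v p hp he.symm
      exact (ENat.add_one_le_iff (by exact_mod_cast ENat.coe_ne_top (2*k))).mpr (lt_of_le_of_ne h1 h2')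
    rw [hgirth] at hle
    have : (2*k) + 1 ≤ 2*k := by exact_mod_cast hle
    omega
  obtain ⟨v, p, hodd, hlen⟩ := hmem
  have hplen : p.length = 2 * k := by exact_mod_cast hlen
  -- k ≥ 1
  have hk : 1 ≤ k := by
    have h1 := negCount_le_length p
    have h2' := Nat.odd_iff.mp hodd
    omega
  obtain ⟨m, hm1⟩ : ∃ m, m + 1 = 2 * k := ⟨2*k - 1, by omega⟩
  have hgoal : 2 * k - 1 = m := by omega
  rw [hgoal]
  -- the family of steps of the minimal walk, reindexed over `Fin (m+1)`
  obtain ⟨n, D₀, SG₀, hn, hval₀, hsum₀, hcnt₀⟩ := family_of_walk h2 Sp Sn p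
  have heq : m + 1 = n := by omega
  set D : Fin (m+1) → Γ := fun i => D₀ (Fin.cast heq i) with hD
  set SG : Fin (m+1) → Bool := fun i => SG₀ (Fin.cast heq i) with hSG
  have hval : ∀ i, if SG i then D i ∈ Sn else D i ∈ Sp := fun i => hval₀ _
  have hsumD : ∑ i, D i = 0 := by
    rw [Fintype.sum_equiv (finCongr heq) D D₀ (fun i => rfl), hsum₀, sub_self]
  have hoddD : Odd (∑ i, if SG i then 1 else 0) := by
    rw [Fintype.sum_equiv (finCongr heq) (fun i => if SG i then 1 else 0)
      (fun i => if SG₀ i then 1 else 0) (fun i => rfl), hcnt₀]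
    exact hodd
  clear hsum₀ hcnt₀ hval₀ hodd hlen hgirth
  -- no proper nonempty subfamily sums to zero
  have H1 : ∀ A : Finset (Fin (m+1)), (∑ i ∈ A, D i) = 0 → A = ∅ ∨ A = Finset.univ := by
    intro A hA
    have htot := Finset.sum_add_sum_compl A D
    rw [hA, hsumD, zero_add] at htot
    have hpar := Finset.sum_add_sum_compl A (fun i => if SG i then 1 else 0)
    by_cases hOdd : Odd (∑ i ∈ A, if SG i then 1 else 0)
    · right
      obtain ⟨q, hl, hnq⟩ := exists_walk_of_family h2 Sp Sn D SG hval A 0 0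
        (by rw [sub_self, hA])
      have := hmin 0 q (by rw [hnq]; exact hOdd)
      apply Finset.eq_univ_of_card
      have hcard : A.card ≤ m + 1 := by
        simpa using Finset.card_le_univ A
      simp only [Fintype.card_fin]
      omega
    · left
      have hOdd2 : Odd (∑ i ∈ Aᶜ, if SG i then 1 else 0) := by
        rw [← hpar] at hoddD
        rw [Nat.odd_iff] at *
        omega
      obtain ⟨q, hl, hnq⟩ := exists_walk_of_family h2 Sp Sn D SG hval Aᶜ 0 0
        (by rw [sub_self, htot])
      have := hmin 0 q (by rw [hnq]; exact hOdd2)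
      have hcu : Aᶜ = Finset.univ := by
        apply Finset.eq_univ_of_card
        have hcard : Aᶜ.card ≤ m + 1 := by simpa using Finset.card_le_univ Aᶜ
        simp only [Fintype.card_fin]
        omega
      have := Finset.card_compl (α := Fin (m+1)) A
      rw [hcu] at this
      simp only [Finset.card_univ, Fintype.card_fin] at this
      rw [← Finset.card_eq_zero]
      omega
  -- every element of `Sp ∪ Sn` in the span is a single generator or a sum of all but one
  have H2 : ∀ x, x ∈ Sp ∪ Sn → ∀ A : Finset (Fin (m+1)), x = ∑ i ∈ A, D i →
      A.card = 1 ∨ A.card = m := by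
    intro x hx A hA
    have hx0 : x ≠ 0 := by
      rintro rfl
      cases hx with
      | inl h => exact h0p h
      | inr h => exact h0n h
    have htot := Finset.sum_add_sum_compl A D
    rw [hsumD, ← hA] at htot
    have hAc : x = ∑ i ∈ Aᶜ, D i := by
      have h3 := congrArg (fun y => x + y) htot
      simpa [← add_assoc, h2 x] using h3.symm
    obtain ⟨p1, hl1, hn1⟩ := exists_walk_of_family h2 Sp Sn D SG hval A x 0
      (by rw [sub_zero]; exact hA)
    obtain ⟨p2, hl2, hn2⟩ := exists_walk_of_family h2 Sp Sn D SG hval Aᶜ x 0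
      (by rw [sub_zero]; exact hAc)
    have hparity : Odd (p1.negCount + p2.negCount) := by
      rw [hn1, hn2, Finset.sum_add_sum_compl A (fun i => if SG i then 1 else 0)]
      exact hoddD
    have hAne : A ≠ ∅ := by
      rintro rfl
      simp only [Finset.sum_empty] at hA
      exact hx0 hA
    have hAnu : A ≠ Finset.univ := by
      rintro rfl
      exact hx0 (hA.trans hsumD)
    have key : 2 * k ≤ A.card + 1 ∨ 2 * k ≤ Aᶜ.card + 1 := by
      cases hx with
      | inl hxp =>
        have hedge : (0 : Γ) - x ∈ Sp := by
          rw [zero_sub, neg_eq_self_of_two h2]; exact hxp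
        rcases Nat.even_or_odd p1.negCount with he | ho
        · right
          have ho2 : Odd p2.negCount := by
            rw [Nat.odd_iff] at hparity ⊢
            rw [Nat.even_iff] at he
            omega
          have := hmin 0 (SignedGraph.Walk.consPos hedge p2) (by
            simpa [SignedGraph.Walk.negCount] using ho2)
          simpa [SignedGraph.Walk.length, hl2] using this
        · left
          have := hmin 0 (SignedGraph.Walk.consPos hedge p1) (by
            simpa [SignedGraph.Walk.negCount] using ho)
          simpa [SignedGraph.Walk.length, hl1] using this
      | inr hxn =>
        have hedge : (0 : Γ) - x ∈ Sn := by
          rw [zero_sub, neg_eq_self_of_two h2]; exact hxn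
        rcases Nat.even_or_odd p1.negCount with he | ho
        · left
          have := hmin 0 (SignedGraph.Walk.consNeg hedge p1) (by
            simpa [SignedGraph.Walk.negCount] using he.add_one)
          simpa [SignedGraph.Walk.length, hl1] using this
        · right
          have he2 : Even p2.negCount := by
            rw [Nat.odd_iff] at hparity ho
            rw [Nat.even_iff]
            omega
          have := hmin 0 (SignedGraph.Walk.consNeg hedge p2) (by
            simpa [SignedGraph.Walk.negCount] using he2.add_one)
          simpa [SignedGraph.Walk.length, hl2] using this
    have hcc := Finset.card_compl (α := Fin (m+1)) A
    simp only [Fintype.card_fin] at hcc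
    have hcard : A.card ≤ m + 1 := by simpa using Finset.card_le_univ A
    have hne0 : A.card ≠ 0 := fun h => hAne (Finset.card_eq_zero.mp h)
    have hnu : A.card ≠ m + 1 := fun h =>
      hAnu (Finset.eq_univ_of_card A (by simp only [Fintype.card_fin]; exact h))
    omega
  -- setup of the embedding of the hypercube
  set e : Fin (m+1) → ZMod 2 := fun j => if D j ∈ Sn then 1 else 0 with he_def
  set φ : (Fin m → ZMod 2) → Γ := phiF (fun i => D i.castSucc) with hφdef
  set χ : (Fin m → ZMod 2) → ZMod 2 := phiF (fun i => e i.castSucc) with hχdef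
  set J : Fin m → ZMod 2 := fun _ => 1 with hJdef
  have hZ2 : ∀ a : ZMod 2, a + a = 0 := by decide
  have hφadd : ∀ x y, φ x + φ y = φ (x + y) := fun x y => phiF_add h2 _ x y
  have hχadd : ∀ x y, χ x + χ y = χ (x + y) := fun x y => phiF_add hZ2 _ x y
  have hφsingle : ∀ i, φ (Pi.single i 1) = D i.castSucc := fun i => phiF_single _ i
  have hχsingle : ∀ i, χ (Pi.single i 1) = e i.castSucc := fun i => phiF_single _ i
  have hφJ : φ J = D (Fin.last m) := by
    rw [hφdef, hJdef, phiF_J]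
    have hs := Fin.sum_univ_castSucc (f := D)
    rw [hsumD] at hs
    rw [eq_neg_of_add_eq_zero_left hs.symm, neg_eq_self_of_two h2]
  have hχJsum : χ J = ∑ i : Fin m, e i.castSucc := by
    rw [hχdef, hJdef]; exact phiF_J _
  -- injectivity of φ
  have hφ0 : ∀ x, φ x = 0 → x = 0 := by
    intro x hx
    have hmap : ∑ i ∈ (Finset.univ.filter (fun i => x i = 1)).map
        ⟨Fin.castSucc, Fin.castSucc_injective m⟩, D i = φ x := by
      rw [Finset.sum_map, hφdef, phiF_filter]
      rfl
    rcases H1 _ (by rw [hmap, hx]) with hA | hA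
    · rw [Finset.map_eq_empty] at hA
      funext j
      rcases zmod2_cases (x j) with h | h
      · simpa using h
      · exfalso
        have hmem : j ∈ Finset.filter (fun i => x i = 1) Finset.univ :=
          Finset.mem_filter.mpr ⟨Finset.mem_univ j, h⟩
        rw [hA] at hmem
        exact Finset.notMem_empty j hmem
    · exfalso
      have hlast : Fin.last m ∈ (Finset.univ.filter (fun i => x i = 1)).map
          ⟨Fin.castSucc, Fin.castSucc_injective m⟩ := by
        rw [hA]; exact Finset.mem_univ _
      rw [Finset.mem_map] at hlast
      obtain ⟨j, _, hj⟩ := hlast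
      exact absurd hj (Fin.castSucc_lt_last j).ne
  have hφinj : Function.Injective φ := by
    intro x y hxy
    have h0 : φ (x + y) = 0 := by rw [← hφadd, hxy, h2]
    have hx0 := hφ0 _ h0
    have hxx : x = (x + y) + y := by rw [add_assoc, pi2 m y, add_zero]
    rw [hx0, zero_add] at hxx
    exact hxx
  -- classification of the edges inside the image of φ
  have hclass : ∀ z : Fin m → ZMod 2, φ z ∈ Sp ∪ Sn →
      (∃ i : Fin m, z = Pi.single i 1) ∨ z = J := by
    intro z hz
    have hmap : ∑ i ∈ (Finset.univ.filter (fun i => z i = 1)).map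
        ⟨Fin.castSucc, Fin.castSucc_injective m⟩, D i = φ z := by
      rw [Finset.sum_map, hφdef, phiF_filter]
      rfl
    rcases H2 _ hz _ hmap.symm with hc1 | hcm
    · left
      rw [Finset.card_map] at hc1
      obtain ⟨i, hi⟩ := Finset.card_eq_one.mp hc1
      refine ⟨i, funext fun j => ?_⟩
      have hmem := Finset.ext_iff.mp hi j
      simp only [Finset.mem_filter, Finset.mem_univ, true_and,
        Finset.mem_singleton] at hmem
      rw [Pi.single_apply]
      by_cases hj : j = i
      · rw [if_pos hj]; exact hmem.mpr hj
      · rw [if_neg hj]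
        rcases zmod2_cases (z j) with h | h
        · exact h
        · exact absurd (hmem.mp h) hj
    · right
      rw [Finset.card_map] at hcm
      have huniv : Finset.univ.filter (fun i => z i = 1) = Finset.univ :=
        Finset.eq_univ_of_card _ (by simp only [Fintype.card_fin]; exact hcm)
      funext j
      have hj := Finset.ext_iff.mp huniv j
      simp only [Finset.mem_filter, Finset.mem_univ, true_and, iff_true] at hj
      exact hj
  -- parity of the total number of negative generators
  have hoddZ : ∑ j, (if SG j then (1 : ZMod 2) else 0) = 1 := by
    obtain ⟨t, ht⟩ := hoddD
    have hcast := congrArg (fun n : ℕ => (n : ZMod 2)) ht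
    push_cast at hcast
    rw [hcast, show ((2 : ZMod 2)) = 0 from by decide]
    ring
  -- either there is no digon, or m = 1
  have hdichot : (∀ j, ¬(D j ∈ Sp ∧ D j ∈ Sn)) ∨ m = 1 := by
    by_cases hD' : ∀ j, ¬(D j ∈ Sp ∧ D j ∈ Sn)
    · exact Or.inl hD'
    · right
      push_neg at hD'
      obtain ⟨j₀, hp', hn'⟩ := hD'
      have hq := hmin 0 (SignedGraph.Walk.consPos (show (0:Γ) - D j₀ ∈ Sp by
          rw [zero_sub, neg_eq_self_of_two h2]; exact hp')
        (SignedGraph.Walk.consNeg (show D j₀ - (0:Γ) ∈ Sn by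
          rw [sub_zero]; exact hn')
          (SignedGraph.Walk.nil (0:Γ))))
        (by simp [SignedGraph.Walk.negCount])
      simp only [SignedGraph.Walk.length] at hq
      omega
  -- the two master sign equivalences
  have hPosNeg : (∀ z, φ z ∈ Sp ↔
      ((∃ i, z = Pi.single i 1) ∧ χ z = 0) ∨ (z = J ∧ χ z = 1)) ∧
      (∀ z, φ z ∈ Sn ↔
      (z = J ∧ χ z = 0) ∨ ((∃ i, z = Pi.single i 1) ∧ χ z = 1)) := by
    rcases hdichot with hND | hm
    · -- Case A : no digon
      have hmemSn : ∀ j, D j ∈ Sn ↔ e j = 1 := by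
        intro j
        by_cases h : D j ∈ Sn <;>
          simp [he_def, h, show (0 : ZMod 2) ≠ 1 from by decide]
      have hmemSp : ∀ j, D j ∈ Sp ↔ e j = 0 := by
        intro j
        constructor
        · intro hp'
          have hn' : D j ∉ Sn := fun hn' => hND j ⟨hp', hn'⟩
          simp [he_def, hn']
        · intro h0
          have hn' : D j ∉ Sn := by
            intro hn'
            rw [(hmemSn j).mp hn'] at h0
            exact absurd h0 (by decide)
          have hvj := hval j
          rcases Bool.eq_false_or_eq_true (SG j) with hsg | hsg <;>
            rw [hsg] at hvj <;> simp at hvj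
          · exact absurd hvj hn'
          · exact hvj
      have hesum : ∑ j, e j = 1 := by
        rw [← hoddZ]
        refine Finset.sum_congr rfl fun j _ => ?_
        have hvj := hval j
        rcases Bool.eq_false_or_eq_true (SG j) with hsg | hsg <;>
          rw [hsg] <;> rw [hsg] at hvj <;> simp at hvj
        · simp [he_def, hvj]
        · have hn' : D j ∉ Sn := fun hn' => hND j ⟨hvj, hn'⟩
          simp [he_def, hn']
      have hχJ : χ J = 1 + e (Fin.last m) := by
        rw [hχJsum]
        have hs := Fin.sum_univ_castSucc (f := e)
        rw [hesum] at hs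
        rw [eq_sub_of_add_eq hs.symm, sub_eq_add_of_two hZ2]
      constructor
      · intro z
        constructor
        · intro hz
          rcases hclass z (Or.inl hz) with ⟨i, rfl⟩ | rfl
          · left
            refine ⟨⟨i, rfl⟩, ?_⟩
            rw [hχsingle i]
            exact (hmemSp _).mp (by rwa [hφsingle i] at hz)
          · right
            refine ⟨rfl, ?_⟩
            rw [hχJ, (hmemSp _).mp (by rwa [hφJ] at hz), add_zero]
        · rintro (⟨⟨i, rfl⟩, hz0⟩ | ⟨rfl, hz1⟩)
          · rw [hφsingle i]
            rw [hχsingle i] at hz0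
            exact (hmemSp _).mpr hz0
          · rw [hφJ]
            rw [hχJ] at hz1
            refine (hmemSp _).mpr ?_
            rcases zmod2_cases (e (Fin.last m)) with h | h
            · exact h
            · rw [h] at hz1; exact absurd hz1 (by decide)
      · intro z
        constructor
        · intro hz
          rcases hclass z (Or.inr hz) with ⟨i, rfl⟩ | rfl
          · right
            refine ⟨⟨i, rfl⟩, ?_⟩
            rw [hχsingle i]
            exact (hmemSn _).mp (by rwa [hφsingle i] at hz)
          · left
            refine ⟨rfl, ?_⟩
            rw [hχJ, (hmemSn _).mp (by rwa [hφJ] at hz)]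
            decide
        · rintro (⟨rfl, hz0⟩ | ⟨⟨i, rfl⟩, hz1⟩)
          · rw [hφJ]
            rw [hχJ] at hz0
            refine (hmemSn _).mpr ?_
            rcases zmod2_cases (e (Fin.last m)) with h | h
            · rw [h] at hz0; exact absurd hz0 (by decide)
            · exact h
          · rw [hφsingle i]
            rw [hχsingle i] at hz1
            exact (hmemSn _).mpr hz1
    · -- Case B : a digon forces m = 1
      subst hm
      have hs2 : D 0 + D 1 = 0 := by
        simpa [Fin.sum_univ_succ] using hsumD
      have hD10 : D 1 = D 0 := by
        have h' : D 1 = -D 0 := eq_neg_of_add_eq_zero_right hs2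
        rw [neg_eq_self_of_two h2] at h'
        exact h'
      have hodd2 : Odd ((if SG 0 then 1 else 0) + (if SG 1 then 1 else 0)) := by
        have h := hoddD
        simp only [Fin.sum_univ_succ, Fin.sum_univ_zero, add_zero,
          Fin.succ_zero_eq_one] at h
        exact h
      have hboth : D 0 ∈ Sp ∧ D 0 ∈ Sn := by
        have h0' := hval 0
        have h1' := hval 1
        rw [hD10] at h1'
        by_cases b0 : SG 0 = true <;> by_cases b1 : SG 1 = true <;>
          simp [b0, b1, Nat.odd_iff] at hodd2 h0' h1'
        · exact ⟨h1', h0'⟩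
        · exact ⟨h0', h1'⟩
      have hJ0 : J = Pi.single (0 : Fin 1) 1 := by
        funext j
        rw [Fin.fin_one_eq_zero j]
        simp [hJdef]
      have hχJ1 : χ J = 1 := by
        rw [hχJsum, Fin.sum_univ_one]
        simp [he_def, Fin.castSucc_zero, hboth.2]
      have hφJ0 : φ J = D 0 := by
        rw [hφJ, show Fin.last 1 = (1 : Fin 2) from rfl, hD10]
      have hzcases : ∀ z : Fin 1 → ZMod 2, z = 0 ∨ z = J := by
        intro z
        rcases zmod2_cases (z 0) with h | h
        · left; funext j; rw [Fin.fin_one_eq_zero j]; simpa using h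
        · right; funext j; rw [Fin.fin_one_eq_zero j]; simpa [hJdef] using h
      have hφz0 : φ 0 = 0 := by rw [hφdef]; exact phiF_zero _
      have hnsingle : ∀ i : Fin 1, (0 : Fin 1 → ZMod 2) ≠ Pi.single i 1 := by
        intro i hi
        have hcf := congrFun hi i
        simp [Pi.single_eq_same] at hcf
      have hnJ : (0 : Fin 1 → ZMod 2) ≠ J := by
        intro hi
        have hcf := congrFun hi 0
        simp [hJdef] at hcf
      constructor
      · intro z
        rcases hzcases z with rfl | rfl
        · rw [hφz0]
          constructor
          · intro hz; exact absurd hz h0p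
          · rintro (⟨⟨i, hi⟩, _⟩ | ⟨hi, _⟩)
            · exact absurd hi (hnsingle i)
            · exact absurd hi hnJ
        · constructor
          · intro _; right; exact ⟨rfl, hχJ1⟩
          · intro _; rw [hφJ0]; exact hboth.1
      · intro z
        rcases hzcases z with rfl | rfl
        · rw [hφz0]
          constructor
          · intro hz; exact absurd hz h0n
          · rintro (⟨hi, _⟩ | ⟨⟨i, hi⟩, _⟩)
            · exact absurd hi hnJ
            · exact absurd hi (hnsingle i)
        · constructor
          · intro _; right; exact ⟨⟨0, hJ0⟩, hχJ1⟩
          · intro _; rw [hφJ0]; exact hboth.2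
  obtain ⟨hPos, hNeg⟩ := hPosNeg
  -- assembly of the switching isomorphism
  set Y : Set (Fin m → ZMod 2) := {x : Fin m → ZMod 2 | χ x = 1} with hYdef
  set f : (Set.range φ) ≃ (Fin m → ZMod 2) := (Equiv.ofInjective φ hφinj).symm with hfdef
  have hφf : ∀ c : Set.range φ, φ (f c) = ↑c :=
    fun c => Equiv.apply_ofInjective_symm hφinj c
  have hdiff : ∀ a b : Set.range φ, (↑a : Γ) - ↑b = φ (f a + f b) := by
    intro a b
    rw [← hφadd, hφf, hφf, sub_eq_add_of_two h2]
  have h3 : ∀ x y : Fin m → ZMod 2, ((x ∈ Y) ↔ (y ∈ Y)) ↔ χ (x + y) = 0 := by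
    intro x y
    show ((χ x = 1) ↔ (χ y = 1)) ↔ _
    rw [← hχadd]
    rcases zmod2_cases (χ x) with h | h <;> rcases zmod2_cases (χ y) with h' | h' <;>
      rw [h, h'] <;> decide
  have h4 : ∀ a : ZMod 2, ¬(a = 0) ↔ a = 1 := by decide
  have hp1 : ∀ x y : Fin m → ZMod 2, (SPC m).pos x y ↔ ∃ i, x + y = Pi.single i 1 := by
    intro x y
    show x - y ∈ {z | ∃ i, z = Pi.single i 1} ↔ _
    rw [sub_eq_add_of_two (pi2 m)]
    exact Iff.rfl
  have hp2 : ∀ x y : Fin m → ZMod 2, (SPC m).neg x y ↔ x + y = J := by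
    intro x y
    show x - y ∈ ({fun _ => 1} : Set (Fin m → ZMod 2)) ↔ _
    rw [sub_eq_add_of_two (pi2 m), Set.mem_singleton_iff, hJdef]
  refine ⟨Set.range φ, Y, f, fun a b => ?_, fun a b => ?_⟩
  · show ((↑a : Γ) - ↑b ∈ Sp) ↔
      (((SPC m).pos (f a) (f b) ∧ ((f a ∈ Y) ↔ (f b ∈ Y))) ∨
       ((SPC m).neg (f a) (f b) ∧ ¬((f a ∈ Y) ↔ (f b ∈ Y))))
    rw [hdiff a b, hp1, hp2, h3, h4 (χ (f a + f b)), hPos (f a + f b)]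

  · show ((↑a : Γ) - ↑b ∈ Sn) ↔
      (((SPC m).neg (f a) (f b) ∧ ((f a ∈ Y) ↔ (f b ∈ Y))) ∨
       ((SPC m).pos (f a) (f b) ∧ ¬((f a ∈ Y) ↔ (f b ∈ Y))))
    rw [hdiff a b, hp1, hp2, h3, h4 (χ (f a + f b)), hNeg (f a + f b)]
end

section
/- Every cube-like graph (Cayley graph on an elementary abelian 2-group) whose odd girth equals 2k+1 contains the projective cube PC(2k) as an induced subgraph. -/
/-- The odd girth of a simple graph: the length of a shortest closed walk of odd length
(equivalently, of a shortest odd cycle); `⊤ = ∞` if the graph is bipartite. -/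
noncomputable def SimpleGraph.oddGirth {V : Type*} (G : SimpleGraph V) : ℕ∞ :=
  sInf {n : ℕ∞ | ∃ (v : V) (p : G.Walk v v), Odd p.length ∧ (p.length : ℕ∞) = n}

/-- A cube-like graph: the Cayley graph of an elementary abelian 2-group `Γ` with connection
set `S ⊆ Γ \ {0}`. -/
def cubeLike (Γ : Type*) [AddCommGroup Γ] (h2 : ∀ x : Γ, x + x = 0) (S : Set Γ)
    (h0 : (0 : Γ) ∉ S) : SimpleGraph Γ where
  Adj x y := x - y ∈ S
  symm := by
    constructor
    intro x y h
    show y - x ∈ S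
    have e : y - x = x - y := by
      rw [← neg_sub x y]
      exact neg_eq_of_add_eq_zero_left (h2 (x - y))
    rw [e]
    exact h
  loopless := by
    constructor
    intro x h
    rw [show x - x = 0 from sub_self x] at h
    exact h0 h

/-- The projective cube `PC(n)`: the graph on `ℤ₂ⁿ` in which `x` and `y` are adjacent iff
`x - y ∈ {e₁, …, e_n, J}`, where the `eᵢ` are the standard basis vectors and `J` is the
all-ones vector. -/
def PCgraph (n : ℕ) : SimpleGraph (Fin n → ZMod 2) :=
  SimpleGraph.fromRel (fun x y => (∃ i, x - y = Pi.single i 1) ∨ x - y = fun _ => 1)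

section Aux
variable {Γ : Type} [AddCommGroup Γ] {h2 : ∀ x : Γ, x + x = 0} {S : Set Γ}
  {h0 : (0 : Γ) ∉ S}

lemma walk_of_list (l : List Γ) (hl : ∀ x ∈ l, x ∈ S) (v : Γ) :
    ∃ p : (cubeLike Γ h2 S h0).Walk (v + l.sum) v, p.length = l.length := by
  induction l generalizing v with
  | nil =>
    exact ⟨SimpleGraph.Walk.nil.copy (by simp) rfl, by rw [SimpleGraph.Walk.length_copy]; rfl⟩
  | cons a l ih =>
    obtain ⟨p, hp⟩ := ih (fun x hx => hl x (List.mem_cons_of_mem a hx)) v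
    have hadj : (cubeLike Γ h2 S h0).Adj (v + (a :: l).sum) (v + l.sum) := by
      show v + (a :: l).sum - (v + l.sum) ∈ S
      have : v + (a :: l).sum - (v + l.sum) = a := by rw [List.sum_cons]; abel
      rw [this]; exact hl a List.mem_cons_self
    exact ⟨SimpleGraph.Walk.cons hadj p, by rw [SimpleGraph.Walk.length_cons, hp, List.length_cons]⟩

lemma list_of_walk {u v : Γ} (p : (cubeLike Γ h2 S h0).Walk u v) :
    ∃ l : List Γ, (∀ x ∈ l, x ∈ S) ∧ l.sum = u - v ∧ l.length = p.length := by
  induction p with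
  | nil => exact ⟨[], by simp, by simp, rfl⟩
  | @cons u w v h q ih =>
    obtain ⟨l, hl, hsum, hlen⟩ := ih
    refine ⟨(u - w) :: l, ?_, ?_, by simp [hlen]⟩
    · intro x hx
      rcases List.mem_cons.1 hx with rfl | hx
      · exact h
      · exact hl x hx
    · rw [List.sum_cons, hsum]; abel

end Aux

/-- every cube-like graph of odd girth `2k+1` contains `PC(2k)` as an induced
subgraph. -/
theorem cubeLike_contains_pc (Γ : Type) [AddCommGroup Γ] (h2 : ∀ x : Γ, x + x = 0)
    (S : Set Γ) (h0 : (0 : Γ) ∉ S) (k : ℕ)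
    (hodd : (cubeLike Γ h2 S h0).oddGirth = ((2*k+1 : ℕ) : ℕ∞)) :
    Nonempty ((PCgraph (2*k)).Embedding (cubeLike Γ h2 S h0)) := by
  classical
  set G := cubeLike Γ h2 S h0 with hG
  have hneg : ∀ g : Γ, -g = g := fun g => neg_eq_of_add_eq_zero_left (h2 g)
  -- minimality
  have hmin : ∀ n : ℕ, Odd n →
      (∃ l : List Γ, (∀ x ∈ l, x ∈ S) ∧ l.sum = 0 ∧ l.length = n) → 2*k+1 ≤ n := by
    rintro n hn ⟨l, hl, hsum, hlen⟩
    obtain ⟨p, hp⟩ := walk_of_list (h2 := h2) (h0 := h0) l hl 0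
    let p' : G.Walk 0 0 := p.copy (by rw [hsum, add_zero]) rfl
    have hp' : p'.length = n := by
      simp only [p', SimpleGraph.Walk.length_copy, hp, hlen]
    have hmem : ((n : ℕ∞)) ∈
        {n : ℕ∞ | ∃ (v : Γ) (p : G.Walk v v), Odd p.length ∧ (p.length : ℕ∞) = n} :=
      ⟨0, p', by rw [hp']; exact hn, by rw [hp']⟩
    have := sInf_le hmem
    rw [← SimpleGraph.oddGirth, hodd] at this
    exact_mod_cast this
  -- existence of a list of length 2k+1
  have hexist : ∃ l : List Γ, (∀ x ∈ l, x ∈ S) ∧ l.sum = 0 ∧ l.length = 2*k+1 := by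
    have hne : {n : ℕ∞ | ∃ (v : Γ) (p : G.Walk v v),
        Odd p.length ∧ (p.length : ℕ∞) = n}.Nonempty := by
      by_contra hemp
      rw [Set.not_nonempty_iff_eq_empty] at hemp
      have : G.oddGirth = ⊤ := by rw [SimpleGraph.oddGirth, hemp, sInf_empty]
      rw [hodd] at this
      exact (ENat.coe_ne_top _) this
    have hmem := csInf_mem hne
    rw [← SimpleGraph.oddGirth, hodd] at hmem
    obtain ⟨v, p, hodd', hlen⟩ := hmem
    obtain ⟨l, hl, hsum, hlen'⟩ := list_of_walk p
    refine ⟨l, hl, by rw [hsum, sub_self], ?_⟩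
    rw [hlen']
    exact_mod_cast hlen
  obtain ⟨l0, hl0, hl0sum, hl0len⟩ := hexist
  -- the sequence s
  set N := 2*k+1 with hN
  let s : Fin N → Γ := fun i => l0.get (finCongr hl0len.symm i)
  have hsS : ∀ i, s i ∈ S := fun i => hl0 _ (List.get_mem l0 _)
  have hstot : ∑ i, s i = 0 := by
    have : ∑ i : Fin N, s i = ∑ j : Fin l0.length, l0.get j :=
      Fintype.sum_equiv (finCongr hl0len.symm) _ _ (fun i => rfl)
    rw [this, ← List.sum_ofFn, List.ofFn_get, hl0sum]
  -- sums over finsets as lists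
  have hlist : ∀ A : Finset (Fin N), ∃ l : List Γ, (∀ x ∈ l, x ∈ S) ∧
      l.sum = ∑ i ∈ A, s i ∧ l.length = A.card := by
    intro A
    refine ⟨A.toList.map s, ?_, ?_, by simp⟩
    · intro x hx
      obtain ⟨i, _, rfl⟩ := List.mem_map.1 hx
      exact hsS i
    · exact Finset.sum_map_toList A s
  -- complement sums
  have hcompl : ∀ A : Finset (Fin N), ∑ i ∈ Aᶜ, s i = ∑ i ∈ A, s i := by
    intro A
    have htot := Finset.sum_add_sum_compl A s
    rw [hstot] at htot
    have h' : ∑ i ∈ Aᶜ, s i = -(∑ i ∈ A, s i) := by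
      rw [eq_neg_iff_add_eq_zero, add_comm]; exact htot
    rw [h', hneg]
  -- key lemma 0
  have key0 : ∀ A : Finset (Fin N), ∑ i ∈ A, s i = 0 → A.card = 0 ∨ A.card = N := by
    intro A hA
    have hcard : A.card ≤ N := by
      simpa using A.card_le_univ
    rcases Nat.even_or_odd A.card with he | ho
    · left
      obtain ⟨m, hm⟩ := he
      obtain ⟨l, hl, hsum, hlen⟩ := hlist Aᶜ
      rw [hcompl, hA] at hsum
      have hcc : Aᶜ.card = N - A.card := by
        rw [Finset.card_compl]; simp [hN]
      have := hmin (N - A.card) ⟨k - m, by omega⟩ ⟨l, hl, hsum, by rw [hlen, hcc]⟩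
      omega
    · right
      obtain ⟨l, hl, hsum, hlen⟩ := hlist A
      rw [hA] at hsum
      have := hmin _ ho ⟨l, hl, hsum, hlen⟩
      omega
  -- key lemma S
  have keyS : ∀ A : Finset (Fin N), (∑ i ∈ A, s i) ∈ S → A.card = 1 ∨ A.card = 2*k := by
    intro A hA
    have hcard : A.card ≤ N := by simpa using A.card_le_univ
    rcases Nat.even_or_odd A.card with he | ho
    · right
      obtain ⟨m, hm⟩ := he
      obtain ⟨l, hl, hsum, hlen⟩ := hlist A
      have hl' : ∀ x ∈ l ++ [∑ i ∈ A, s i], x ∈ S := by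
        intro x hx
        rcases List.mem_append.1 hx with hx | hx
        · exact hl x hx
        · rw [List.mem_singleton.1 hx]; exact hA
      have hsum' : (l ++ [∑ i ∈ A, s i]).sum = 0 := by
        rw [List.sum_append, List.sum_singleton, hsum, h2]
      have hlen' : (l ++ [∑ i ∈ A, s i]).length = A.card + 1 := by
        simp [hlen]
      have := hmin (A.card + 1) ⟨m, by omega⟩ ⟨_, hl', hsum', hlen'⟩
      omega
    · left
      obtain ⟨m, hm⟩ := ho
      obtain ⟨l, hl, hsum, hlen⟩ := hlist Aᶜ
      rw [hcompl] at hsum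
      have hl' : ∀ x ∈ l ++ [∑ i ∈ A, s i], x ∈ S := by
        intro x hx
        rcases List.mem_append.1 hx with hx | hx
        · exact hl x hx
        · rw [List.mem_singleton.1 hx]; exact hA
      have hsum' : (l ++ [∑ i ∈ A, s i]).sum = 0 := by
        rw [List.sum_append, List.sum_singleton, hsum, h2]
      have hcc : Aᶜ.card = N - A.card := by
        rw [Finset.card_compl]; simp [hN]
      have hlen' : (l ++ [∑ i ∈ A, s i]).length = N - A.card + 1 := by
        simp [hlen, hcc]
      have := hmin (N - A.card + 1) ⟨k - m, by omega⟩ ⟨_, hl', hsum', hlen'⟩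
      omega
  -- the map
  let F : (Fin (2*k) → ZMod 2) → Finset (Fin (2*k)) := fun x => {i | x i = 1}
  let emb : Fin (2*k) ↪ Fin N := ⟨Fin.castSucc, Fin.castSucc_injective _⟩
  let φ : (Fin (2*k) → ZMod 2) → Γ := fun x => ∑ i ∈ (F x).map emb, s i
  have hz2 : ∀ a : ZMod 2, a = 0 ∨ a = 1 := by decide
  have hmemF : ∀ x i, i ∈ F x ↔ x i = 1 := by
    intro x i; simp [F]
  -- additivity
  have hφ' : ∀ x, φ x = ∑ i : Fin (2*k), (if x i = 1 then s i.castSucc else 0) := by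
    intro x
    rw [show φ x = ∑ i ∈ (F x).map emb, s i from rfl, Finset.sum_map]
    show ∑ i ∈ F x, s i.castSucc = _
    rw [show F x = Finset.univ.filter (fun i => x i = 1) from rfl, Finset.sum_filter]
  have hadd : ∀ x y, φ (x + y) = φ x + φ y := by
    intro x y
    rw [hφ' x, hφ' y, hφ' (x + y), ← Finset.sum_add_distrib]
    apply Finset.sum_congr rfl
    intro i _
    have hxy : (x + y) i = x i + y i := rfl
    rw [hxy]
    rcases hz2 (x i) with h | h <;> rcases hz2 (y i) with h' | h' <;>
      simp [h, h', show (1 : ZMod 2) + 1 = 0 from rfl, h2]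
  have hφ0 : φ 0 = 0 := by
    have h := hadd 0 0
    rw [add_zero] at h
    exact (add_eq_left.mp h.symm)
  -- kernel
  have hker : ∀ z, φ z = 0 → z = 0 := by
    intro z hz
    have hcard := key0 _ hz
    rw [Finset.card_map] at hcard
    have hle : (F z).card ≤ 2*k := by simpa using (F z).card_le_univ
    have h0' : (F z).card = 0 := by omega
    rw [Finset.card_eq_zero] at h0'
    funext i
    rcases hz2 (z i) with h | h
    · exact h
    · exfalso
      have hi : i ∈ F z := (hmemF z i).2 h
      rw [h0'] at hi
      simp at hi
  have hinj : Function.Injective φ := by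
    intro x y hxy
    have hz : φ (x + y) = 0 := by
      rw [hadd, hxy, h2]
    have hz' := hker _ hz
    funext i
    have hzi : x i + y i = 0 := congrFun hz' i
    rcases hz2 (x i) with h | h <;> rcases hz2 (y i) with h' | h' <;>
      rw [h, h'] at hzi ⊢ <;> first | rfl | simp at hzi
  -- sub = add
  have hsubΓ : ∀ a b : Γ, a - b = a + b := by
    intro a b; rw [sub_eq_add_neg, hneg]
  have hsubP : ∀ a b : Fin (2*k) → ZMod 2, a - b = a + b := by
    intro a b; funext i
    show a i - b i = a i + b i
    rw [sub_eq_add_neg]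
    congr 1
    rcases hz2 (b i) with h | h <;> rw [h] <;> decide
  have hφsub : ∀ x y, φ x - φ y = φ (x - y) := by
    intro x y
    rw [hsubΓ, hsubP, hadd]
  -- F of single and allones
  have hsingle : ∀ i : Fin (2*k), F (Pi.single i 1) = {i} := by
    intro i
    ext j
    rw [hmemF, Finset.mem_singleton, Pi.single_apply]
    by_cases h : j = i <;> simp [h]
  have hallones : F (fun _ => 1) = Finset.univ := by
    ext j; simp [hmemF]
  have hmapuniv : (Finset.univ : Finset (Fin (2*k))).map emb = {Fin.last (2*k)}ᶜ := by
    ext j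
    simp only [Finset.mem_map, Finset.mem_compl, Finset.mem_singleton, Finset.mem_univ,
      true_and]
    show (∃ i : Fin (2*k), Fin.castSucc i = j) ↔ ¬ j = Fin.last (2*k)
    exact Fin.exists_castSucc_eq
  have hslast : ∑ i ∈ (Finset.univ : Finset (Fin (2*k))).map emb, s i
      = s (Fin.last (2*k)) := by
    rw [hmapuniv, hcompl, Finset.sum_singleton]
  -- forward: φ of the generators lies in S
  have hfwd : ∀ z : Fin (2*k) → ZMod 2,
      ((∃ i, z = Pi.single i 1) ∨ z = fun _ => 1) → φ z ∈ S := by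
    rintro z (⟨i, rfl⟩ | rfl)
    · rw [show φ (Pi.single i 1) = ∑ j ∈ (F (Pi.single i 1)).map emb, s j from rfl,
        hsingle, Finset.map_singleton, Finset.sum_singleton]
      exact hsS _
    · rw [show φ (fun _ => 1) = ∑ j ∈ (F (fun _ => 1)).map emb, s j from rfl,
        hallones, hslast]
      exact hsS _
  -- backward
  have hbwd : ∀ z : Fin (2*k) → ZMod 2, φ z ∈ S →
      (∃ i, z = Pi.single i 1) ∨ z = fun _ => 1 := by
    intro z hz
    have hcard := keyS _ hz
    rw [Finset.card_map] at hcard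
    rcases hcard with h1 | h2k
    · left
      obtain ⟨i, hi⟩ := Finset.card_eq_one.1 h1
      refine ⟨i, funext fun j => ?_⟩
      rw [Pi.single_apply]
      by_cases h : j = i
      · subst h
        simp only [if_pos rfl]
        exact (hmemF z j).1 (by rw [hi]; exact Finset.mem_singleton_self j)
      · rw [if_neg h]
        rcases hz2 (z j) with h' | h'
        · exact h'
        · exfalso
          have := (hmemF z j).2 h'
          rw [hi, Finset.mem_singleton] at this
          exact h this
    · right
      have huniv : F z = Finset.univ := by
        apply Finset.eq_univ_of_card
        rw [h2k]; simp
      funext j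
      exact (hmemF z j).1 (by rw [huniv]; exact Finset.mem_univ j)
  -- negation in the Pi group
  have hnegP : ∀ z : Fin (2*k) → ZMod 2, -z = z := by
    intro z; funext i
    show -(z i) = z i
    rcases hz2 (z i) with h | h <;> rw [h] <;> decide
  refine ⟨⟨⟨φ, hinj⟩, ?_⟩⟩
  intro x y
  show G.Adj (φ x) (φ y) ↔ (PCgraph (2*k)).Adj x y
  have hGadj : G.Adj (φ x) (φ y) ↔ φ (x - y) ∈ S := by
    rw [hG]
    show φ x - φ y ∈ S ↔ _
    rw [hφsub]
  rw [hGadj, PCgraph, SimpleGraph.fromRel_adj]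
  constructor
  · intro hS
    have hz0 : x - y ≠ 0 := by
      intro h
      rw [h, hφ0] at hS
      exact h0 hS
    exact ⟨sub_ne_zero.1 hz0, Or.inl (hbwd _ hS)⟩
  · rintro ⟨hne, hrel | hrel⟩
    · exact hfwd _ hrel
    · have : y - x = x - y := by
        rw [← neg_sub x y, hnegP]
      rw [this] at hrel
      exact hfwd _ hrel
end
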